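/- arXiv:2404.13480 — 13 statements merged into one kernel-verified Lean document; each statement's English description precedes it below -/
import Mathlib

section
/- In every conditional algebra ⟨A, →⟩ the following hold for all a, b, x, y ∈ A: (i) if a ≤ b then x → a ≤ x → b; (ii) if a ≤ b then b → x ≤ a → x; (iii) (a → b) ⊓ (x → y) ≤ (a ⊓ x) → (b ⊓ y). -/
/-- basic monotonicity properties of the conditional in a conditional algebra. -/
theorem statement0 {A : Type*} [BooleanAlgebra A] (c : A → A → A)
    (hC1 : ∀ a : A, c a ⊤ = ⊤)
    (hC2 : ∀ a b d : A, c a b ⊓ c a d = c a (b ⊓ d))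
    (hC3 : ∀ a b d : A, c (a ⊔ b) d ≤ c a d ⊓ c b d) :
    (∀ a b x : A, a ≤ b → c x a ≤ c x b) ∧
    (∀ a b x : A, a ≤ b → c b x ≤ c a x) ∧
    (∀ a b x y : A, c a b ⊓ c x y ≤ c (a ⊓ x) (b ⊓ y)) := by
  have mono : ∀ a b x : A, a ≤ b → c x a ≤ c x b := by
    intro a b x h
    have : c x a = c x a ⊓ c x b := by rw [hC2, inf_eq_left.mpr h]
    rw [this]; exact inf_le_right
  have anti : ∀ a b x : A, a ≤ b → c b x ≤ c a x := by
    intro a b x h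
    have : c b x = c (a ⊔ b) x := by rw [sup_eq_right.mpr h]
    rw [this]; exact (hC3 a b x).trans inf_le_left
  refine ⟨mono, anti, fun a b x y => ?_⟩
  have h1 : c a b ≤ c (a ⊓ x) b := anti _ _ _ inf_le_left
  have h2 : c x y ≤ c (a ⊓ x) y := anti _ _ _ inf_le_right
  calc c a b ⊓ c x y ≤ c (a ⊓ x) b ⊓ c (a ⊓ x) y := inf_le_inf h1 h2
    _ = c (a ⊓ x) (b ⊓ y) := hC2 _ _ _
end

section
/- Let ⟨A, →⟩ be a conditional algebra and let F and H be filters of A. Then D_H(F) := {b ∈ A : ∃ a ∈ F, a → b ∈ H} is a filter of A, i.e., it contains ⊤, is upward closed, and is closed under binary meets. -/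
/-- A filter of a Boolean algebra: contains `⊤`, upward closed, closed under binary meets. -/
def IsBFilter {A : Type*} [BooleanAlgebra A] (F : Set A) : Prop :=
  ⊤ ∈ F ∧ (∀ a b : A, a ∈ F → a ≤ b → b ∈ F) ∧ (∀ a b : A, a ∈ F → b ∈ F → a ⊓ b ∈ F)

/-- `D_H(F)` is a filter whenever `F` and `H` are filters of a conditional algebra. -/
theorem statement1 {A : Type*} [BooleanAlgebra A] (c : A → A → A)
    (hC1 : ∀ a : A, c a ⊤ = ⊤)
    (hC2 : ∀ a b d : A, c a b ⊓ c a d = c a (b ⊓ d))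
    (hC3 : ∀ a b d : A, c (a ⊔ b) d ≤ c a d ⊓ c b d)
    (F H : Set A) (hF : IsBFilter F) (hH : IsBFilter H) :
    IsBFilter {b : A | ∃ a ∈ F, c a b ∈ H} := by
  obtain ⟨hFtop, hFup, hFmeet⟩ := hF
  obtain ⟨hHtop, hHup, hHmeet⟩ := hH
  -- antitone in first argument
  have anti : ∀ a a' b : A, a' ≤ a → c a b ≤ c a' b := by
    intro a a' b h
    have : c (a' ⊔ a) b ≤ c a' b ⊓ c a b := hC3 a' a b
    rw [sup_eq_right.mpr h] at this
    exact le_trans this inf_le_left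
  refine ⟨⟨⊤, hFtop, by rw [hC1]; exact hHtop⟩, ?_, ?_⟩
  · rintro b b' ⟨a, haF, haH⟩ hbb'
    refine ⟨a, haF, hHup _ _ haH ?_⟩
    have : c a b ⊓ c a b' = c a b := by rw [hC2, inf_eq_left.mpr hbb']
    calc c a b = c a b ⊓ c a b' := this.symm
      _ ≤ c a b' := inf_le_right
  · rintro b₁ b₂ ⟨a₁, ha₁F, ha₁H⟩ ⟨a₂, ha₂F, ha₂H⟩
    refine ⟨a₁ ⊓ a₂, hFmeet _ _ ha₁F ha₂F, ?_⟩
    rw [← hC2]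
    exact hHmeet _ _
      (hHup _ _ ha₁H (anti _ _ _ inf_le_left))
      (hHup _ _ ha₂H (anti _ _ _ inf_le_right))
end

section
/- Let X be a set, 𝓕 a family of subsets of X, and T a ternary relation holding between points of X, members of 𝓕, and points of X. For U, V ⊆ X define U →_T V := {x ∈ X : for every Z ∈ 𝓕 with Z ⊆ U, T(x, Z) ⊆ V}, where T(x, Z) := {y ∈ X : T(x, Z, y)}. Then the Boolean algebra 𝒫(X) together with →_T is a conditional algebra, i.e., →_T satisfies (C1) U →_T X = X, (C2) (U →_T V) ∩ (U →_T W) = U →_T (V ∩ W), and (C3) (U ∪ V) →_T W ⊆ (U →_T W) ∩ (V →_T W). -/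
/-- The conditional operation on `𝒫(X)` induced by a ternary hybrid relation `T`
(relative to a family `𝓕` of subsets of `X`). -/
def cd {X : Type*} (F : Set (Set X)) (T : X → Set X → X → Prop) (U V : Set X) : Set X :=
  {x : X | ∀ Z ∈ F, Z ⊆ U → ∀ y : X, T x Z y → y ∈ V}

/-- the power set algebra with `→_T` is a conditional algebra. -/
theorem statement2 {X : Type*} (F : Set (Set X)) (T : X → Set X → X → Prop) :
    (∀ U : Set X, cd F T U Set.univ = Set.univ) ∧
    (∀ U V W : Set X, cd F T U V ∩ cd F T U W = cd F T U (V ∩ W)) ∧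
    (∀ U V W : Set X, cd F T (U ∪ V) W ⊆ cd F T U W ∩ cd F T V W) := by
  refine ⟨fun U => ?_, fun U V W => ?_, fun U V W => ?_⟩
  · ext x; simp [cd]
  · ext x
    constructor
    · rintro ⟨h1, h2⟩ Z hZ hZU y hT
      exact ⟨h1 Z hZ hZU y hT, h2 Z hZ hZU y hT⟩
    · intro h
      exact ⟨fun Z hZ hZU y hT => (h Z hZ hZU y hT).1,
             fun Z hZ hZU y hT => (h Z hZ hZU y hT).2⟩
  · intro x h
    exact ⟨fun Z hZ hZU y hT => h Z hZ (hZU.trans Set.subset_union_left) y hT,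
           fun Z hZ hZV y hT => h Z hZ (hZV.trans Set.subset_union_right) y hT⟩
end

section
/- Let ⟨A, →⟩ be a conditional algebra, H a filter of A, and a, b ∈ A. Then (1) a → b ∈ H if and only if for every filter F of A with a ∈ F one has b ∈ D_H(F); and consequently (2) a → b ∉ H if and only if there exist a filter F of A and an ultrafilter u of A such that a ∈ F, D_H(F) ⊆ u, and b ∉ u. -/
/-- An ultrafilter: a maximal proper filter. -/
def IsBUltra {A : Type*} [BooleanAlgebra A] (u : Set A) : Prop :=
  IsBFilter u ∧ u ≠ Set.univ ∧
    ∀ F : Set A, IsBFilter F → F ≠ Set.univ → u ⊆ F → F = u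

/-- `D_X(Y) = {b | ∃ a ∈ Y, a → b ∈ X}`. -/
def Dset {A : Type*} [BooleanAlgebra A] (c : A → A → A) (X Y : Set A) : Set A :=
  {b : A | ∃ a ∈ Y, c a b ∈ X}

section Aux
variable {A : Type*} [BooleanAlgebra A]

/-- A filter avoiding ⊥ is proper, and a proper filter avoids ⊥. -/
lemma bfilter_ne_univ_iff {F : Set A} (hF : IsBFilter F) : F ≠ Set.univ ↔ ⊥ ∉ F := by
  constructor
  · intro h hb
    exact h (Set.eq_univ_of_forall fun x => hF.2.1 ⊥ x hb bot_le)
  · intro h he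
    exact h (he ▸ Set.mem_univ ⊥)

/-- Extend a filter avoiding b to an ultrafilter avoiding b. -/
lemma exists_bultra {D : Set A} (hD : IsBFilter D) {b : A} (hb : b ∉ D) :
    ∃ u : Set A, IsBUltra u ∧ D ⊆ u ∧ b ∉ u := by
  set G : Set A := {x | ∃ d ∈ D, d ⊓ bᶜ ≤ x} with hGdef
  have hDG : D ⊆ G := fun d hd => ⟨d, hd, inf_le_left⟩
  have hGfil : IsBFilter G := by
    refine ⟨⟨⊤, hD.1, le_top⟩, ?_, ?_⟩
    · rintro x y ⟨d, hd, hdx⟩ hxy; exact ⟨d, hd, hdx.trans hxy⟩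
    · rintro x y ⟨d, hd, hdx⟩ ⟨e, he, hey⟩
      exact ⟨d ⊓ e, hD.2.2 d e hd he, by
        calc d ⊓ e ⊓ bᶜ ≤ (d ⊓ bᶜ) ⊓ (e ⊓ bᶜ) := by
              simp [inf_assoc, inf_comm, inf_left_comm, le_refl]
          _ ≤ x ⊓ y := inf_le_inf hdx hey⟩
  have hGbot : ⊥ ∉ G := by
    rintro ⟨d, hd, hdb⟩
    have : d ≤ b := by
      have : d ⊓ bᶜ = ⊥ := le_antisymm hdb bot_le
      rwa [← sdiff_eq, sdiff_eq_bot_iff] at this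
    exact hb (hD.2.1 d b hd this)
  set S : Set (Set A) := {F | IsBFilter F ∧ ⊥ ∉ F ∧ G ⊆ F} with hSdef
  have hchain : ∀ ch ⊆ S, IsChain (· ⊆ ·) ch → ch.Nonempty →
      ∃ ub ∈ S, ∀ s ∈ ch, s ⊆ ub := by
    rintro ch hchS hch ⟨F0, hF0⟩
    refine ⟨⋃₀ ch, ⟨⟨?_, ?_, ?_⟩, ?_, ?_⟩, fun s hs => Set.subset_sUnion_of_mem hs⟩
    · exact ⟨F0, hF0, (hchS hF0).1.1⟩
    · rintro x y ⟨F, hF, hxF⟩ hxy; exact ⟨F, hF, (hchS hF).1.2.1 x y hxF hxy⟩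
    · rintro x y ⟨F, hF, hxF⟩ ⟨F', hF', hyF'⟩
      rcases hch.total hF hF' with h | h
      · exact ⟨F', hF', (hchS hF').1.2.2 x y (h hxF) hyF'⟩
      · exact ⟨F, hF, (hchS hF).1.2.2 x y hxF (h hyF')⟩
    · rintro ⟨F, hF, hbF⟩; exact (hchS hF).2.1 hbF
    · exact (hchS hF0).2.2.trans (Set.subset_sUnion_of_mem hF0)
  obtain ⟨m, hGm, hmS, hmax⟩ := zorn_subset_nonempty S hchain G ⟨hGfil, hGbot, subset_rfl⟩
  have hmfil := hmS.1
  have hmbot := hmS.2.1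
  have hmne : m ≠ Set.univ := (bfilter_ne_univ_iff hmfil).mpr hmbot
  refine ⟨m, ⟨hmfil, hmne, ?_⟩, hDG.trans hmS.2.2, ?_⟩
  · intro F hF hFne hmF
    have hFbot : ⊥ ∉ F := (bfilter_ne_univ_iff hF).mp hFne
    exact Set.Subset.antisymm (hmax ⟨hF, hFbot, hmS.2.2.trans hmF⟩ hmF) hmF
  · intro hbm
    have hcb : bᶜ ∈ m := hmS.2.2 ⟨⊤, hD.1, by simp⟩
    have : b ⊓ bᶜ ∈ m := hmfil.2.2 b bᶜ hbm hcb
    rw [inf_compl_eq_bot] at this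
    exact hmbot this

end Aux


/-- membership of `a → b` in a filter `H` via the sets `D_H(F)`. -/
theorem statement3 {A : Type*} [BooleanAlgebra A] (c : A → A → A)
    (hC1 : ∀ a : A, c a ⊤ = ⊤)
    (hC2 : ∀ a b d : A, c a b ⊓ c a d = c a (b ⊓ d))
    (hC3 : ∀ a b d : A, c (a ⊔ b) d ≤ c a d ⊓ c b d)
    (H : Set A) (hH : IsBFilter H) (a b : A) :
    (c a b ∈ H ↔ ∀ F : Set A, IsBFilter F → a ∈ F → b ∈ Dset c H F) ∧
    (c a b ∉ H ↔ ∃ F u : Set A, IsBFilter F ∧ IsBUltra u ∧ a ∈ F ∧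
      Dset c H F ⊆ u ∧ b ∉ u) := by
  have canti : ∀ {x y : A} (z : A), x ≤ y → c y z ≤ c x z := by
    intro x y z h
    have := hC3 x y z
    rw [sup_eq_right.mpr h] at this
    exact this.trans inf_le_left
  have cmono : ∀ (x : A) {y z : A}, y ≤ z → c x y ≤ c x z := by
    intro x y z h
    have := hC2 x y z
    rw [inf_eq_left.mpr h] at this
    exact inf_eq_left.mp this
  -- the principal filter at a
  set P : Set A := {x | a ≤ x} with hPdef
  have hPfil : IsBFilter P := ⟨le_top, fun x y hx hxy => hx.trans hxy,
    fun x y hx hy => le_inf hx hy⟩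
  have haP : a ∈ P := le_refl a
  have part1 : c a b ∈ H ↔ ∀ F : Set A, IsBFilter F → a ∈ F → b ∈ Dset c H F := by
    constructor
    · intro h F _ haF; exact ⟨a, haF, h⟩
    · intro h
      obtain ⟨a', ha', hc'⟩ := h P hPfil haP
      exact hH.2.1 _ _ hc' (canti b ha')
  refine ⟨part1, ?_, ?_⟩
  · intro h
    -- D := D_H(P) is a filter not containing b
    have hDfil : IsBFilter (Dset c H P) := by
      refine ⟨⟨a, haP, by rw [hC1]; exact hH.1⟩, ?_, ?_⟩
      · rintro x y ⟨a', ha', hc'⟩ hxy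
        exact ⟨a', ha', hH.2.1 _ _ hc' (cmono a' hxy)⟩
      · rintro x y ⟨a1, ha1, hc1⟩ ⟨a2, ha2, hc2⟩
        refine ⟨a1 ⊓ a2, hPfil.2.2 a1 a2 ha1 ha2, ?_⟩
        have h1 : c a1 x ≤ c (a1 ⊓ a2) x := canti x inf_le_left
        have h2 : c a2 y ≤ c (a1 ⊓ a2) y := canti y inf_le_right
        have : c (a1 ⊓ a2) x ⊓ c (a1 ⊓ a2) y ∈ H :=
          hH.2.2 _ _ (hH.2.1 _ _ hc1 h1) (hH.2.1 _ _ hc2 h2)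
        rwa [hC2] at this
    have hbD : b ∉ Dset c H P := by
      rintro ⟨a', ha', hc'⟩
      exact h (hH.2.1 _ _ hc' (canti b ha'))
    obtain ⟨u, hu, hDu, hbu⟩ := exists_bultra hDfil hbD
    exact ⟨P, u, hPfil, hu, haP, hDu, hbu⟩
  · rintro ⟨F, u, hF, hu, haF, hDu, hbu⟩ hcab
    exact hbu (hDu ⟨a, haF, hcab⟩)
end

section
/- Let ⟨A, →⟩ be a conditional algebra. Define, for U, V ⊆ Ul(A), U →^σ V := {u ∈ Ul(A) : there exist an ideal I of A and a filter F of A such that (i) a → b ∈ u for all a ∈ I and b ∈ F, (ii) every ultrafilter w ∈ U contains some element of I, and (iii) φ(F) ⊆ V}. Then ⟨𝒫(Ul(A)), →^σ⟩ is a conditional algebra, i.e., →^σ satisfies (C1) U →^σ Ul(A) = Ul(A), (C2) (U →^σ V) ∩ (U →^σ W) = U →^σ (V ∩ W), and (C3) (U ∪ V) →^σ W ⊆ (U →^σ W) ∩ (V →^σ W). -/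
/-- The set (type) of ultrafilters of `A`. -/
abbrev Ult (A : Type*) [BooleanAlgebra A] := {u : Set A // IsBUltra u}

/-- The Stone map `φ(a) = {u ∈ Ul(A) : a ∈ u}`. -/
def phi {A : Type*} [BooleanAlgebra A] (a : A) : Set (Ult A) := {u : Ult A | a ∈ u.1}

/-- The hybrid ternary relation `T_A` on the ultrafilter frame:
`T_A(u, Z, v)` iff `Z = φ(F)` and `D_u(F) ⊆ v` for some filter `F`. -/
def TRel {A : Type*} [BooleanAlgebra A] (c : A → A → A)
    (u : Ult A) (Z : Set (Ult A)) (v : Ult A) : Prop :=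
  ∃ F : Set A, IsBFilter F ∧ Z = {w : Ult A | F ⊆ w.1} ∧ Dset c u.1 F ⊆ v.1

/-- The π-extension: `U →_{T_A} V = {u : ∀ Z ⊆ U, T_A(u, Z) ⊆ V}`. -/
def condT {A : Type*} [BooleanAlgebra A] (c : A → A → A) (U V : Set (Ult A)) : Set (Ult A) :=
  {u : Ult A | ∀ Z ⊆ U, ∀ v : Ult A, TRel c u Z v → v ∈ V}

/-- An ideal of a Boolean algebra: contains `⊥`, downward closed, closed under binary joins. -/
def IsBIdeal {A : Type*} [BooleanAlgebra A] (I : Set A) : Prop :=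
  ⊥ ∈ I ∧ (∀ a b : A, a ∈ I → b ≤ a → b ∈ I) ∧ (∀ a b : A, a ∈ I → b ∈ I → a ⊔ b ∈ I)

/-- The σ-extension of the conditional to sets of ultrafilters. -/
def condSigma {A : Type*} [BooleanAlgebra A] (c : A → A → A) (U V : Set (Ult A)) :
    Set (Ult A) :=
  {u : Ult A | ∃ I F : Set A, IsBIdeal I ∧ IsBFilter F ∧
    (∀ a ∈ I, ∀ b ∈ F, c a b ∈ u.1) ∧
    (∀ w ∈ U, ∃ a ∈ I, a ∈ w.1) ∧
    {v : Ult A | F ⊆ v.1} ⊆ V}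

/-- the σ-extension again yields a conditional algebra on `𝒫(Ul(A))`. -/
theorem statement5 {A : Type*} [BooleanAlgebra A] (c : A → A → A)
    (hC1 : ∀ a : A, c a ⊤ = ⊤)
    (hC2 : ∀ a b d : A, c a b ⊓ c a d = c a (b ⊓ d))
    (hC3 : ∀ a b d : A, c (a ⊔ b) d ≤ c a d ⊓ c b d) :
    (∀ U : Set (Ult A), condSigma c U Set.univ = Set.univ) ∧
    (∀ U V W : Set (Ult A),
      condSigma c U V ∩ condSigma c U W = condSigma c U (V ∩ W)) ∧
    (∀ U V W : Set (Ult A),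
      condSigma c (U ∪ V) W ⊆ condSigma c U W ∩ condSigma c V W) := by
  have hmono : ∀ a x y : A, x ≤ y → c a x ≤ c a y := by
    intro a x y hxy
    have h : c a x ⊓ c a y = c a x := by
      rw [hC2, inf_eq_left.mpr hxy]
    calc c a x = c a x ⊓ c a y := h.symm
      _ ≤ c a y := inf_le_right
  refine ⟨?_, ?_, ?_⟩
  · -- C1
    intro U
    ext u
    simp only [Set.mem_univ, iff_true]
    refine ⟨Set.univ, {⊤}, ⟨trivial, fun _ _ _ _ => trivial, fun _ _ _ _ => trivial⟩,
      ⟨rfl, ?_, ?_⟩, ?_, ?_, fun _ _ => trivial⟩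
    · intro a b ha hab; exact le_antisymm le_top (ha ▸ hab) ▸ rfl
    · intro a b ha hb; simp_all
    · intro a _ b hb
      rcases hb with rfl
      rw [hC1]; exact u.2.1.1
    · intro w _
      exact ⟨⊤, trivial, w.2.1.1⟩
  · -- C2
    intro U V W
    ext u
    constructor
    · rintro ⟨⟨I₁, F₁, hI₁, hF₁, hc₁, hU₁, hV₁⟩, ⟨I₂, F₂, hI₂, hF₂, hc₂, hU₂, hV₂⟩⟩
      refine ⟨I₁ ∩ I₂, {b | ∃ b₁ ∈ F₁, ∃ b₂ ∈ F₂, b₁ ⊓ b₂ ≤ b}, ?_, ?_, ?_, ?_, ?_⟩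
      · exact ⟨⟨hI₁.1, hI₂.1⟩,
          fun a b ha hba => ⟨hI₁.2.1 a b ha.1 hba, hI₂.2.1 a b ha.2 hba⟩,
          fun a b ha hb => ⟨hI₁.2.2 a b ha.1 hb.1, hI₂.2.2 a b ha.2 hb.2⟩⟩
      · refine ⟨⟨⊤, hF₁.1, ⊤, hF₂.1, le_top⟩, ?_, ?_⟩
        · rintro a b ⟨b₁, hb₁, b₂, hb₂, hle⟩ hab
          exact ⟨b₁, hb₁, b₂, hb₂, hle.trans hab⟩
        · rintro a b ⟨a₁, ha₁, a₂, ha₂, hlea⟩ ⟨b₁, hb₁, b₂, hb₂, hleb⟩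
          refine ⟨a₁ ⊓ b₁, hF₁.2.2 _ _ ha₁ hb₁, a₂ ⊓ b₂, hF₂.2.2 _ _ ha₂ hb₂, ?_⟩
          calc (a₁ ⊓ b₁) ⊓ (a₂ ⊓ b₂) ≤ (a₁ ⊓ a₂) ⊓ (b₁ ⊓ b₂) := by
                refine le_inf (le_inf ?_ ?_) (le_inf ?_ ?_) <;>
                  simp [inf_le_left.trans, inf_le_right.trans, le_trans]
            _ ≤ a ⊓ b := inf_le_inf hlea hleb
      · rintro a ⟨ha₁, ha₂⟩ b ⟨b₁, hb₁, b₂, hb₂, hle⟩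
        have h1 : c a b₁ ∈ u.1 := hc₁ a ha₁ b₁ hb₁
        have h2 : c a b₂ ∈ u.1 := hc₂ a ha₂ b₂ hb₂
        have h3 : c a (b₁ ⊓ b₂) ∈ u.1 := by
          rw [← hC2]; exact u.2.1.2.2 _ _ h1 h2
        exact u.2.1.2.1 _ _ h3 (hmono a _ _ hle)
      · intro w hw
        obtain ⟨a₁, ha₁, hw₁⟩ := hU₁ w hw
        obtain ⟨a₂, ha₂, hw₂⟩ := hU₂ w hw
        exact ⟨a₁ ⊓ a₂, ⟨hI₁.2.1 _ _ ha₁ inf_le_left, hI₂.2.1 _ _ ha₂ inf_le_right⟩,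
          w.2.1.2.2 _ _ hw₁ hw₂⟩
      · intro v hv
        have hF₁v : F₁ ⊆ v.1 := fun b hb => hv ⟨b, hb, ⊤, hF₂.1, by simp⟩
        have hF₂v : F₂ ⊆ v.1 := fun b hb => hv ⟨⊤, hF₁.1, b, hb, by simp⟩
        exact ⟨hV₁ hF₁v, hV₂ hF₂v⟩
    · rintro ⟨I, F, hI, hF, hc, hU, hV⟩
      exact ⟨⟨I, F, hI, hF, hc, hU, fun v hv => (hV hv).1⟩,
        ⟨I, F, hI, hF, hc, hU, fun v hv => (hV hv).2⟩⟩
  · -- C3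
    rintro U V W u ⟨I, F, hI, hF, hc, hU, hV⟩
    exact ⟨⟨I, F, hI, hF, hc, fun w hw => hU w (Or.inl hw), hV⟩,
      ⟨I, F, hI, hF, hc, fun w hw => hU w (Or.inr hw), hV⟩⟩
end

section
/- On the Boolean algebra 𝒫(ℕ) define P → Q := ℕ if P ⊆ Q; P → Q := the set of even numbers if P ⊄ Q and the set of even numbers is not contained in P; and P → Q := ∅ otherwise. Then ⟨𝒫(ℕ), →⟩ is a conditional algebra, and for E := {u_e : e even}, where u_e is the principal ultrafilter generated by {e}, one has: E →_{T} E equals the set of all ultrafilters of 𝒫(ℕ), while the principal ultrafilter generated by {3} does not belong to E →^σ E. Consequently E →^σ E ≠ E →_{T} E, so the σ-extension and the π-extension of → differ (→ is not smooth). -/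
open scoped Classical in
/-- The non-smooth conditional on `𝒫(ℕ)`. -/
noncomputable def cnd (P Q : Set ℕ) : Set ℕ :=
  if P ⊆ Q then Set.univ
  else if ¬ ({n : ℕ | Even n} ⊆ P) then {n : ℕ | Even n}
  else ∅

/-- The set of principal ultrafilters at even numbers. -/
def Eset : Set (Ult (Set ℕ)) :=
  {u : Ult (Set ℕ) | ∃ e : ℕ, Even e ∧ u.1 = {P : Set ℕ | e ∈ P}}

lemma isBUltra_of_prime {A : Type*} [BooleanAlgebra A] {u : Set A}
    (hf : IsBFilter u) (hbot : ⊥ ∉ u) (hp : ∀ b : A, b ∈ u ∨ bᶜ ∈ u) : IsBUltra u := by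
  refine ⟨hf, ?_, ?_⟩
  · intro h; exact hbot (h ▸ Set.mem_univ _)
  · intro F hF hFne hsub
    refine Set.eq_of_subset_of_subset ?_ hsub
    intro b hb
    rcases hp b with h | h
    · exact h
    · exfalso
      apply hFne
      have hbot' : (⊥ : A) ∈ F := by
        have := hF.2.2 b bᶜ hb (hsub h)
        simpa using this
      exact Set.eq_univ_of_forall fun x => hF.2.1 ⊥ x hbot' bot_le

lemma principal_ultra (n : ℕ) : IsBUltra {P : Set ℕ | n ∈ P} := by
  apply isBUltra_of_prime
  · exact ⟨trivial, fun a b ha hab => hab ha, fun a b ha hb => ⟨ha, hb⟩⟩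
  · simp [Set.bot_eq_empty]
  · intro b
    by_cases h : n ∈ b
    · exact Or.inl h
    · exact Or.inr h

lemma ultrafilter_ultra (U : Ultrafilter ℕ) : IsBUltra {P : Set ℕ | P ∈ U} := by
  apply isBUltra_of_prime
  · exact ⟨Filter.univ_mem, fun a b ha hab => Filter.mem_of_superset ha hab,
      fun a b ha hb => Filter.inter_mem ha hb⟩
  · simp [Set.bot_eq_empty]
  · exact fun b => Ultrafilter.mem_or_compl_mem U b

lemma subset_of_three_mem {P Q : Set ℕ} (h : (3:ℕ) ∈ cnd P Q) : P ⊆ Q := by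
  unfold cnd at h
  split_ifs at h with h1 h2
  · exact h1
  all_goals simp_all [Nat.even_iff]

lemma exists_nonprincipal :
    ∃ U : Ultrafilter ℕ, {n : ℕ | Even n} ∈ U ∧ ∀ e : ℕ, ∃ s ∈ U, e ∉ s := by
  have hinf : {n : ℕ | Even n}.Infinite :=
    Set.infinite_of_injective_forall_mem (f := fun k : ℕ => 2 * k)
      (fun a b h => by simp only at h; omega) (fun a => ⟨a, by ring⟩)
  have hne : (Filter.cofinite ⊓ Filter.principal {n : ℕ | Even n}).NeBot :=
    hinf.cofinite_inf_principal_neBot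
  refine ⟨Ultrafilter.of (Filter.cofinite ⊓ Filter.principal {n : ℕ | Even n}), ?_, ?_⟩
  · exact Ultrafilter.of_le _ (Filter.mem_inf_of_right (Filter.mem_principal_self _))
  · intro e
    refine ⟨{e}ᶜ, Ultrafilter.of_le _ (Filter.mem_inf_of_left ?_), by simp⟩
    simp [Filter.mem_cofinite]

/-- `⟨𝒫(ℕ), cnd⟩` is a conditional algebra whose conditional is not smooth:
`E →_T E` is the set of all ultrafilters, the principal ultrafilter at `3` is not in
`E →^σ E`, and hence the σ- and π-extensions differ. -/
theorem statement6 :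
    (∀ P : Set ℕ, cnd P Set.univ = Set.univ) ∧
    (∀ P Q R : Set ℕ, cnd P Q ∩ cnd P R = cnd P (Q ∩ R)) ∧
    (∀ P Q R : Set ℕ, cnd (P ∪ Q) R ⊆ cnd P R ∩ cnd Q R) ∧
    condT cnd Eset Eset = Set.univ ∧
    (∀ u : Ult (Set ℕ), u.1 = {P : Set ℕ | (3 : ℕ) ∈ P} → u ∉ condSigma cnd Eset Eset) ∧
    condSigma cnd Eset Eset ≠ condT cnd Eset Eset := by
  have h1 : ∀ P : Set ℕ, cnd P Set.univ = Set.univ := by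
    intro P; simp [cnd, Set.subset_univ]
  have h2 : ∀ P Q R : Set ℕ, cnd P Q ∩ cnd P R = cnd P (Q ∩ R) := by
    intro P Q R
    unfold cnd
    split_ifs <;> simp_all [Set.subset_inter_iff]
  have h3 : ∀ P Q R : Set ℕ, cnd (P ∪ Q) R ⊆ cnd P R ∩ cnd Q R := by
    intro P Q R
    have hP : {n : ℕ | Even n} ⊆ P → {n : ℕ | Even n} ⊆ P ∪ Q :=
      fun h => h.trans Set.subset_union_left
    have hQ : {n : ℕ | Even n} ⊆ Q → {n : ℕ | Even n} ⊆ P ∪ Q :=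
      fun h => h.trans Set.subset_union_right
    unfold cnd
    split_ifs <;> simp_all [Set.union_subset_iff]
  have h4 : condT cnd Eset Eset = Set.univ := by
    apply Set.eq_univ_of_forall
    intro u Z hZ v hT
    obtain ⟨F, hF, hZeq, hD⟩ := hT
    apply hZ
    rw [hZeq]
    show F ⊆ v.1
    intro b hb
    apply hD
    refine ⟨b, hb, ?_⟩
    have hcb : cnd b b = Set.univ := by unfold cnd; rw [if_pos (subset_refl b)]
    rw [hcb]
    exact u.2.1.1
  have h5 : ∀ u : Ult (Set ℕ), u.1 = {P : Set ℕ | (3 : ℕ) ∈ P} →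
      u ∉ condSigma cnd Eset Eset := by
    intro u hu hmem
    obtain ⟨I, F, hI, hF, hcnd, hcov, hphi⟩ := hmem
    have hsub : ∀ a ∈ I, ∀ b ∈ F, a ⊆ b := by
      intro a ha b hb
      have h := hcnd a ha b hb
      rw [hu] at h
      exact subset_of_three_mem h
    have hEb : ∀ b ∈ F, {n : ℕ | Even n} ⊆ b := by
      intro b hb e he
      obtain ⟨a, ha, hea⟩ := hcov ⟨{P : Set ℕ | e ∈ P}, principal_ultra e⟩ ⟨e, he, rfl⟩
      exact hsub a ha b hb hea
    obtain ⟨U, hEU, hnp⟩ := exists_nonprincipal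
    have hw : (⟨{P : Set ℕ | P ∈ U}, ultrafilter_ultra U⟩ : Ult (Set ℕ)) ∈ Eset := by
      apply hphi
      intro b hb
      exact Filter.mem_of_superset hEU (hEb b hb)
    obtain ⟨e, he, heq⟩ := hw
    obtain ⟨s, hsU, hes⟩ := hnp e
    have heq' : {P : Set ℕ | P ∈ U} = {P : Set ℕ | e ∈ P} := heq
    have hs : s ∈ {P : Set ℕ | P ∈ U} := hsU
    rw [heq'] at hs
    exact hes hs
  refine ⟨h1, h2, h3, h4, h5, ?_⟩
  intro heq
  have h := h5 ⟨{P : Set ℕ | (3:ℕ) ∈ P}, principal_ultra 3⟩ rfl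
  apply h
  rw [heq, h4]
  exact Set.mem_univ _
end

section
/- Let A be a Boolean algebra with an arbitrary binary operation → : A × A → A. Then A satisfies (C3), i.e., (a ⊔ b) → c ≤ (a → c) ⊓ (b → c) for all a, b, c ∈ A, if and only if for every a ∈ A and every filter F of A, D_F(↑a) ⊆ {b ∈ A : a → b ∈ F}, where ↑a := {x ∈ A : a ≤ x}. In particular, in any conditional algebra D_F(↑a) = {b ∈ A : a → b ∈ F}. -/
/-- a Boolean algebra with an arbitrary binary operation `→` satisfies (C3)
iff `D_F(↑a) ⊆ {b : a → b ∈ F}` for every `a` and every filter `F`; in particular, in any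
conditional algebra the equality `D_F(↑a) = {b : a → b ∈ F}` holds. -/
theorem statement7 {A : Type*} [BooleanAlgebra A] (c : A → A → A) :
    ((∀ a b d : A, c (a ⊔ b) d ≤ c a d ⊓ c b d) ↔
      (∀ (a : A) (F : Set A), IsBFilter F →
        Dset c F {x : A | a ≤ x} ⊆ {b : A | c a b ∈ F})) ∧
    ((∀ a : A, c a ⊤ = ⊤) → (∀ a b d : A, c a b ⊓ c a d = c a (b ⊓ d)) →
      (∀ a b d : A, c (a ⊔ b) d ≤ c a d ⊓ c b d) →
      ∀ (a : A) (F : Set A), IsBFilter F →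
        Dset c F {x : A | a ≤ x} = {b : A | c a b ∈ F}) := by
  have fwd : (∀ a b d : A, c (a ⊔ b) d ≤ c a d ⊓ c b d) →
      ∀ (a : A) (F : Set A), IsBFilter F →
        Dset c F {x : A | a ≤ x} ⊆ {b : A | c a b ∈ F} := by
    intro h3 a F hF b hb
    obtain ⟨x, hax, hxb⟩ := hb
    have hx : a ⊔ x = x := sup_eq_right.mpr hax
    have : c x b ≤ c a b := by
      have := h3 a x b
      rw [hx] at this
      exact this.trans inf_le_left
    exact hF.2.1 _ _ hxb this
  constructor
  · constructor
    · exact fwd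
    · intro h a b d
      have hF : IsBFilter {y : A | c (a ⊔ b) d ≤ y} :=
        ⟨le_top, fun u v hu huv => hu.trans huv, fun u v hu hv => le_inf hu hv⟩
      have hd1 : d ∈ Dset c {y : A | c (a ⊔ b) d ≤ y} {x : A | a ≤ x} :=
        ⟨a ⊔ b, le_sup_left, le_refl _⟩
      have hd2 : d ∈ Dset c {y : A | c (a ⊔ b) d ≤ y} {x : A | b ≤ x} :=
        ⟨a ⊔ b, le_sup_right, le_refl _⟩
      exact le_inf (h a _ hF hd1) (h b _ hF hd2)
  · intro _ _ h3 a F hF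
    apply Set.Subset.antisymm (fwd h3 a F hF)
    intro b hb
    exact ⟨a, le_refl a, hb⟩
end

section
/- Let A be a Boolean algebra, B ⊆ A a Boolean subalgebra (a subset containing ⊤ and ⊥ and closed under ⊓, ⊔ and ¬), and {□_b}_{b ∈ B} a family of maps A → A satisfying, for all b, b₁, b₂ ∈ B and x, y ∈ A: (M1) □_b ⊤ = ⊤, (M2) □_b(x ⊓ y) = □_b x ⊓ □_b y, and (M3) □_{b₁ ⊔ b₂} x ≤ □_{b₁} x ⊓ □_{b₂} x. For an ultrafilter u of A and b ∈ B set Q_b(u) := {v ∈ Ul(A) : {x ∈ A : □_b x ∈ u} ⊆ v}, and for S ⊆ Ul(A) set [Q_b](S) := {u ∈ Ul(A) : Q_b(u) ⊆ S}. Then for every b ∈ B and a ∈ A, φ(□_b a) = [Q_b](φ(a)). -/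
/-- A Boolean subalgebra: contains `⊤`, `⊥` and is closed under `⊓`, `⊔`, `ᶜ`. -/
def IsBSubalgebra {A : Type*} [BooleanAlgebra A] (B : Set A) : Prop :=
  ⊤ ∈ B ∧ ⊥ ∈ B ∧ (∀ a ∈ B, ∀ b ∈ B, a ⊓ b ∈ B) ∧ (∀ a ∈ B, ∀ b ∈ B, a ⊔ b ∈ B) ∧
    (∀ a ∈ B, aᶜ ∈ B)

/-- `Q_b(u) = {v : {x : □_b x ∈ u} ⊆ v}`. -/
def Qrel {A : Type*} [BooleanAlgebra A] (Box : A → A → A) (b : A) (u : Ult A) :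
    Set (Ult A) :=
  {v : Ult A | {x : A | Box b x ∈ u.1} ⊆ v.1}

/-- `[Q_b](S) = {u : Q_b(u) ⊆ S}`. -/
def boxQ {A : Type*} [BooleanAlgebra A] (Box : A → A → A) (b : A) (S : Set (Ult A)) :
    Set (Ult A) :=
  {u : Ult A | Qrel Box b u ⊆ S}

lemma proper_iff {A : Type*} [BooleanAlgebra A] {F : Set A} (hF : IsBFilter F) :
    F ≠ Set.univ ↔ ⊥ ∉ F := by
  constructor
  · intro hne hbot
    apply hne
    ext x
    simp only [Set.mem_univ, iff_true]
    exact hF.2.1 ⊥ x hbot bot_le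
  · intro h hne
    exact h (hne ▸ Set.mem_univ ⊥)

lemma exists_ultra_ext {A : Type*} [BooleanAlgebra A] {F : Set A} (hF : IsBFilter F)
    (hne : F ≠ Set.univ) : ∃ u : Ult A, F ⊆ u.1 := by
  have hchainub : ∀ c ⊆ {G : Set A | IsBFilter G ∧ ⊥ ∉ G}, IsChain (· ⊆ ·) c →
      c.Nonempty → ∃ ub ∈ {G : Set A | IsBFilter G ∧ ⊥ ∉ G}, ∀ s ∈ c, s ⊆ ub := by
    intro c hcS hchain hcne
    obtain ⟨G₀, hG₀⟩ := hcne
    refine ⟨⋃₀ c, ⟨⟨?_, ?_, ?_⟩, ?_⟩, fun s hs => Set.subset_sUnion_of_mem hs⟩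
    · exact ⟨G₀, hG₀, (hcS hG₀).1.1⟩
    · rintro a b ⟨G, hG, haG⟩ hab
      exact ⟨G, hG, (hcS hG).1.2.1 a b haG hab⟩
    · rintro a b ⟨G₁, hG₁, ha⟩ ⟨G₂, hG₂, hb⟩
      rcases hchain.total hG₁ hG₂ with h | h
      · exact ⟨G₂, hG₂, (hcS hG₂).1.2.2 a b (h ha) hb⟩
      · exact ⟨G₁, hG₁, (hcS hG₁).1.2.2 a b ha (h hb)⟩
    · rintro ⟨G, hG, hbot⟩
      exact (hcS hG).2 hbot
  obtain ⟨m, hFm, hm⟩ := zorn_subset_nonempty _ hchainub F ⟨hF, (proper_iff hF).1 hne⟩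
  have hmF : IsBFilter m := hm.1.1
  have hmbot : ⊥ ∉ m := hm.1.2
  exact ⟨⟨m, hmF, (proper_iff hmF).2 hmbot, fun G hG hGne hmG =>
    subset_antisymm (hm.2 ⟨hG, (proper_iff hG).1 hGne⟩ hmG) hmG⟩, hFm⟩

/-- in a multi-modal antitone algebra, `φ(□_b a) = [Q_b](φ(a))`. -/
theorem statement8 {A : Type*} [BooleanAlgebra A] (B : Set A) (hB : IsBSubalgebra B)
    (Box : A → A → A)
    (hM1 : ∀ b ∈ B, Box b ⊤ = ⊤)
    (hM2 : ∀ b ∈ B, ∀ x y : A, Box b (x ⊓ y) = Box b x ⊓ Box b y)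
    (hM3 : ∀ b₁ ∈ B, ∀ b₂ ∈ B, ∀ x : A, Box (b₁ ⊔ b₂) x ≤ Box b₁ x ⊓ Box b₂ x) :
    ∀ b ∈ B, ∀ a : A, phi (Box b a) = boxQ Box b (phi a) := by
  intro b hb a
  have mono : ∀ x y : A, x ≤ y → Box b x ≤ Box b y := by
    intro x y hxy
    have : Box b x = Box b x ⊓ Box b y := by
      rw [← hM2 b hb, inf_eq_left.2 hxy]
    rw [this]; exact inf_le_right
  ext u
  constructor
  · -- forward: easy
    intro hu v hv
    exact hv hu
  · -- backward: contrapositive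
    intro hu
    by_contra hBox
    -- F = preimage filter
    set F : Set A := {x : A | Box b x ∈ u.1} with hFdef
    have hFfil : IsBFilter F := by
      refine ⟨?_, ?_, ?_⟩
      · show Box b ⊤ ∈ u.1; rw [hM1 b hb]; exact u.2.1.1
      · intro x y hx hxy
        exact u.2.1.2.1 _ _ hx (mono x y hxy)
      · intro x y hx hy
        show Box b (x ⊓ y) ∈ u.1
        rw [hM2 b hb]
        exact u.2.1.2.2 _ _ hx hy
    -- G = filter generated by F ∪ {aᶜ}
    set G : Set A := {z : A | ∃ x ∈ F, x ⊓ aᶜ ≤ z} with hGdef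
    have hGfil : IsBFilter G := by
      refine ⟨⟨⊤, hFfil.1, le_top⟩, ?_, ?_⟩
      · rintro z w ⟨x, hx, hxz⟩ hzw
        exact ⟨x, hx, hxz.trans hzw⟩
      · rintro z w ⟨x₁, hx₁, h₁⟩ ⟨x₂, hx₂, h₂⟩
        refine ⟨x₁ ⊓ x₂, hFfil.2.2 _ _ hx₁ hx₂, ?_⟩
        have : (x₁ ⊓ x₂) ⊓ aᶜ ≤ (x₁ ⊓ aᶜ) ⊓ (x₂ ⊓ aᶜ) := by
          simp only [le_inf_iff]
          exact ⟨⟨inf_le_left.trans inf_le_left, inf_le_right⟩,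
            ⟨inf_le_left.trans inf_le_right, inf_le_right⟩⟩
        exact this.trans (inf_le_inf h₁ h₂)
    have hGne : G ≠ Set.univ := by
      rw [proper_iff hGfil]
      rintro ⟨x, hx, hxb⟩
      have hxa : x ≤ a := by
        rwa [← sdiff_eq, le_bot_iff, sdiff_eq_bot_iff] at hxb
      exact hBox (u.2.1.2.1 _ _ hx (mono x a hxa))
    obtain ⟨v, hGv⟩ := exists_ultra_ext hGfil hGne
    have hFv : F ⊆ v.1 := fun x hx => hGv ⟨x, hx, inf_le_left⟩
    have hav : a ∈ v.1 := hu hFv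
    have hacv : aᶜ ∈ v.1 := hGv ⟨⊤, hFfil.1, by simp⟩
    have : (⊥ : A) ∈ v.1 := by
      have := v.2.1.2.2 a aᶜ hav hacv
      rwa [inf_compl_eq_bot] at this
    exact (proper_iff v.2.1).1 v.2.2.1 this
end

section
/- Let X be a set and T ⊆ X × 𝒫(X) × X an arbitrary ternary relation. Define its upward closure T̄ by T̄(x, U, y) iff there exists Z ⊆ U with T(x, Z, y), define U →_{T̄} V := {x ∈ X : for all Z ⊆ U, T̄(x, Z) ⊆ V}, let e(x) := {M ⊆ X : x ∈ M} be the principal ultrafilter of 𝒫(X) at x, and for ultrafilters u, v of 𝒫(X) and a family 𝒵 of ultrafilters define T̄'(u, 𝒵, v) iff for all U ∈ ⋂𝒵 and all V ⊆ X, U →_{T̄} V ∈ u implies V ∈ v. Then for all x, y ∈ X and all Z ⊆ X: T̄'(e(x), e[Z], e(y)) holds if and only if T̄(x, Z, y); in particular, T(x, Z, y) implies T̄'(e(x), e[Z], e(y)), so the injective map e embeds the frame ⟨X, T⟩ into the ultrafilter frame ⟨Ul(𝒫(X)), T̄'⟩. -/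
/-- The principal ultrafilter of `𝒫(X)` at `x`. -/
def e {X : Type*} (x : X) : Set (Set X) := {M : Set X | x ∈ M}

/-- The upward closure of a ternary relation `T ⊆ X × 𝒫(X) × X` in the second
coordinate: `T̄(x, U, y)` iff `T(x, Z, y)` for some `Z ⊆ U`. -/
def Tbar {X : Type*} (T : X → Set X → X → Prop) (x : X) (U : Set X) (y : X) : Prop :=
  ∃ Z ⊆ U, T x Z y

/-- `U →_{T̄} V = {x : ∀ Z ⊆ U, T̄(x, Z) ⊆ V}`. -/
def cndTbar {X : Type*} (T : X → Set X → X → Prop) (U V : Set X) : Set X :=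
  {x : X | ∀ Z ⊆ U, ∀ y : X, Tbar T x Z y → y ∈ V}

/-- The relation `T̄'` on (ultra)filters of `𝒫(X)`: `T̄'(u, 𝒵, v)` iff for every
`U ∈ ⋂𝒵` and every `V ⊆ X`, `U →_{T̄} V ∈ u` implies `V ∈ v`. -/
def Tbar' {X : Type*} (T : X → Set X → X → Prop)
    (u : Set (Set X)) (Zs : Set (Set (Set X))) (v : Set (Set X)) : Prop :=
  ∀ U : Set X, (∀ w ∈ Zs, U ∈ w) → ∀ V : Set X, cndTbar T U V ∈ u → V ∈ v

/-- `T̄'(e(x), e[Z], e(y)) ↔ T̄(x, Z, y)`; in particular `T(x, Z, y)`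
implies `T̄'(e(x), e[Z], e(y))`, and `e` is injective, so `e` embeds `⟨X, T⟩` into the
ultrafilter frame `⟨Ul(𝒫(X)), T̄'⟩`. -/
theorem statement12 {X : Type*} (T : X → Set X → X → Prop) :
    (∀ (x y : X) (Z : Set X), Tbar' T (e x) (e '' Z) (e y) ↔ Tbar T x Z y) ∧
    (∀ (x y : X) (Z : Set X), T x Z y → Tbar' T (e x) (e '' Z) (e y)) ∧
    Function.Injective (e (X := X)) := by
  have key : ∀ (x y : X) (Z : Set X), Tbar' T (e x) (e '' Z) (e y) ↔ Tbar T x Z y := by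
    intro x y Z
    constructor
    · intro h
      have hU : ∀ w ∈ e '' Z, Z ∈ w := by
        rintro w ⟨z, hz, rfl⟩; exact hz
      have hx : cndTbar T Z {y' | Tbar T x Z y'} ∈ e x := by
        intro Z' hZ' y' hy'
        obtain ⟨W, hW, hT⟩ := hy'
        exact ⟨W, hW.trans hZ', hT⟩
      exact h Z hU _ hx
    · intro hT U hU V hV
      have hZU : Z ⊆ U := fun z hz => hU (e z) ⟨z, hz, rfl⟩
      exact hV Z hZU y hT
  refine ⟨key, fun x y Z h => (key x y Z).mpr ⟨Z, le_refl _, h⟩, ?_⟩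
  intro a b hab
  have : ({a} : Set X) ∈ e b := hab ▸ (rfl : a ∈ ({a} : Set X))
  exact this.symm
end

section
/- Let A be a Boolean algebra and B ⊆ A a Boolean subalgebra. For filters F and H of A, the following are equivalent: (1) for every ultrafilter u of A with F ⊆ u there exists an ultrafilter v of A with H ⊆ v and u ∩ B = v ∩ B (i.e., φ(F) ⪯_{E_B} φ(H)); (2) H ∩ B ⊆ F. -/
section Aux
variable {A : Type*} [BooleanAlgebra A]

lemma univ_iff_bot {F : Set A} (hF : IsBFilter F) : F = Set.univ ↔ ⊥ ∈ F := by
  constructor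
  · intro h; rw [h]; trivial
  · intro h; ext a; simp only [Set.mem_univ, iff_true]
    exact hF.2.1 ⊥ a h bot_le

/-- filter generated by a filter `G` and a meet-closed set `S` containing `⊤`. -/
lemma gen_filter {G S : Set A} (hG : IsBFilter G) (hS1 : ⊤ ∈ S)
    (hS2 : ∀ a ∈ S, ∀ b ∈ S, a ⊓ b ∈ S) :
    IsBFilter {c | ∃ g ∈ G, ∃ s ∈ S, g ⊓ s ≤ c} := by
  refine ⟨⟨⊤, hG.1, ⊤, hS1, le_top⟩, ?_, ?_⟩
  · rintro a b ⟨g, hg, s, hs, hle⟩ hab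
    exact ⟨g, hg, s, hs, hle.trans hab⟩
  · rintro a b ⟨g1, hg1, s1, hs1, h1⟩ ⟨g2, hg2, s2, hs2, h2⟩
    refine ⟨g1 ⊓ g2, hG.2.2 _ _ hg1 hg2, s1 ⊓ s2, hS2 _ hs1 _ hs2, ?_⟩
    calc (g1 ⊓ g2) ⊓ (s1 ⊓ s2) = (g1 ⊓ s1) ⊓ (g2 ⊓ s2) := by
          rw [inf_assoc, inf_assoc]; congr 1
          rw [← inf_assoc, ← inf_assoc, inf_comm g2 s1]
      _ ≤ a ⊓ b := inf_le_inf h1 h2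

lemma exists_ultra {G : Set A} (hG : IsBFilter G) (hbot : ⊥ ∉ G) :
    ∃ u : Set A, IsBUltra u ∧ G ⊆ u := by
  obtain ⟨m, hGm, hm⟩ := zorn_subset_nonempty
    {X : Set A | IsBFilter X ∧ ⊥ ∉ X ∧ G ⊆ X}
    (fun c hc hchain hne => by
      refine ⟨⋃₀ c, ⟨⟨?_, ?_, ?_⟩, ?_, ?_⟩, fun s hs => Set.subset_sUnion_of_mem hs⟩
      · obtain ⟨X, hX⟩ := hne; exact ⟨X, hX, (hc hX).1.1⟩
      · rintro a b ⟨X, hX, ha⟩ hab; exact ⟨X, hX, (hc hX).1.2.1 a b ha hab⟩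
      · rintro a b ⟨X, hX, ha⟩ ⟨Y, hY, hb⟩
        rcases hchain.total hX hY with h | h
        · exact ⟨Y, hY, (hc hY).1.2.2 a b (h ha) hb⟩
        · exact ⟨X, hX, (hc hX).1.2.2 a b ha (h hb)⟩
      · rintro ⟨X, hX, hbX⟩; exact (hc hX).2.1 hbX
      · obtain ⟨X, hX⟩ := hne; exact (hc hX).2.2.trans (Set.subset_sUnion_of_mem hX))
    G ⟨hG, hbot, subset_rfl⟩
  refine ⟨m, ⟨hm.prop.1, ?_, ?_⟩, hm.prop.2.2⟩
  · intro h; exact hm.prop.2.1 (((univ_iff_bot hm.prop.1).mp h))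
  · intro X hX hXne hmX
    have : X ∈ {X : Set A | IsBFilter X ∧ ⊥ ∉ X ∧ G ⊆ X} :=
      ⟨hX, fun hb => hXne ((univ_iff_bot hX).mpr hb), hm.prop.2.2.trans hmX⟩
    exact hm.eq_of_ge this hmX

lemma ultra_bot {u : Set A} (hu : IsBUltra u) : ⊥ ∉ u :=
  fun h => hu.2.1 ((univ_iff_bot hu.1).mpr h)

lemma ultra_compl {u : Set A} (hu : IsBUltra u) (a : A) (ha : a ∉ u) : aᶜ ∈ u := by
  have hfil : IsBFilter {c | ∃ g ∈ u, ∃ s ∈ ({⊤, aᶜ} : Set A), g ⊓ s ≤ c} := by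
    refine gen_filter hu.1 (by simp) ?_
    rintro x hx y hy
    simp only [Set.mem_insert_iff, Set.mem_singleton_iff] at hx hy ⊢
    rcases hx with rfl | rfl <;> rcases hy with rfl | rfl <;> simp
  by_cases hbot : ⊥ ∈ {c | ∃ g ∈ u, ∃ s ∈ ({⊤, aᶜ} : Set A), g ⊓ s ≤ c}
  · obtain ⟨g, hg, s, hs, hle⟩ := hbot
    simp only [Set.mem_insert_iff, Set.mem_singleton_iff] at hs
    rcases hs with rfl | rfl
    · exact (ultra_bot hu (hu.1.2.1 g ⊥ hg (by simpa using hle))).elim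
    · have : g ≤ a := sdiff_eq_bot_iff.mp (le_bot_iff.mp (by simpa [sdiff_eq] using hle))
      exact absurd (hu.1.2.1 g a hg this) ha
  · have heq := hu.2.2 _ hfil (fun h => hbot ((univ_iff_bot hfil).mp h))
      (fun x hx => ⟨x, hx, ⊤, by simp, by simp⟩)
    rw [← heq]
    exact ⟨⊤, hu.1.1, aᶜ, by simp, by simp⟩

end Aux

/-- `φ(F) ⪯_{E_B} φ(H)` iff `H ∩ B ⊆ F`. -/
theorem statement13 {A : Type*} [BooleanAlgebra A] (B : Set A) (hB : IsBSubalgebra B)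
    (F H : Set A) (hF : IsBFilter F) (hH : IsBFilter H) :
    (∀ u : Set A, IsBUltra u → F ⊆ u →
      ∃ v : Set A, IsBUltra v ∧ H ⊆ v ∧ u ∩ B = v ∩ B) ↔ H ∩ B ⊆ F := by
  constructor
  · intro hmain b hb
    obtain ⟨hbH, hbB⟩ := hb
    by_contra hbF
    have hbotF : ⊥ ∉ F := fun h => hbF (hF.2.1 ⊥ b h bot_le)
    set G : Set A := {c | ∃ g ∈ F, ∃ s ∈ ({⊤, bᶜ} : Set A), g ⊓ s ≤ c} with hGdef
    have hGfil : IsBFilter G := by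
      refine gen_filter hF (by simp) ?_
      rintro x hx y hy
      simp only [Set.mem_insert_iff, Set.mem_singleton_iff] at hx hy ⊢
      rcases hx with rfl | rfl <;> rcases hy with rfl | rfl <;> simp
    have hGbot : ⊥ ∉ G := by
      rintro ⟨g, hg, s, hs, hle⟩
      simp only [Set.mem_insert_iff, Set.mem_singleton_iff] at hs
      rcases hs with rfl | rfl
      · exact hbotF (hF.2.1 g ⊥ hg (by simpa using hle))
      · have : g ≤ b := sdiff_eq_bot_iff.mp (le_bot_iff.mp (by simpa [sdiff_eq] using hle))
        exact hbF (hF.2.1 g b hg this)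
    obtain ⟨u, hu, hGu⟩ := exists_ultra hGfil hGbot
    have hFu : F ⊆ u := fun x hx => hGu ⟨x, hx, ⊤, by simp, by simp⟩
    have hbcu : bᶜ ∈ u := hGu ⟨⊤, hF.1, bᶜ, by simp, by simp⟩
    obtain ⟨v, hv, hHv, heq⟩ := hmain u hu hFu
    have hbuB : b ∈ u ∩ B := heq ▸ ⟨hHv hbH, hbB⟩
    exact ultra_bot hu (by simpa using hu.1.2.2 b bᶜ hbuB.1 hbcu)
  · intro hsub u hu hFu
    have hS1 : (⊤ : A) ∈ u ∩ B := ⟨hu.1.1, hB.1⟩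
    have hS2 : ∀ a ∈ u ∩ B, ∀ b ∈ u ∩ B, a ⊓ b ∈ u ∩ B := fun a ha b hb =>
      ⟨hu.1.2.2 a b ha.1 hb.1, hB.2.2.1 a ha.2 b hb.2⟩
    set G : Set A := {c | ∃ g ∈ H, ∃ s ∈ u ∩ B, g ⊓ s ≤ c} with hGdef
    have hGfil : IsBFilter G := gen_filter hH hS1 hS2
    have hGbot : ⊥ ∉ G := by
      rintro ⟨g, hg, s, hs, hle⟩
      have hgs : g ≤ sᶜ :=
        le_compl_iff_disjoint_right.mpr (disjoint_iff.mpr (le_bot_iff.mp hle))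
      have hscF : sᶜ ∈ F := hsub ⟨hH.2.1 g sᶜ hg hgs, hB.2.2.2.2 s hs.2⟩
      exact ultra_bot hu (by simpa using hu.1.2.2 s sᶜ hs.1 (hFu hscF))
    obtain ⟨v, hv, hGv⟩ := exists_ultra hGfil hGbot
    refine ⟨v, hv, fun x hx => hGv ⟨x, hx, ⊤, hS1, by simp⟩, ?_⟩
    have huBv : u ∩ B ⊆ v := fun s hs => hGv ⟨⊤, hH.1, s, hs, by simp⟩
    apply Set.Subset.antisymm
    · exact fun s hs => ⟨huBv hs, hs.2⟩
    · rintro s ⟨hsv, hsB⟩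
      refine ⟨?_, hsB⟩
      by_contra hsu
      have hscu : sᶜ ∈ u := ultra_compl hu s hsu
      have : sᶜ ∈ v := huBv ⟨hscu, hB.2.2.2.2 s hsB⟩
      exact ultra_bot hv (by simpa using hv.1.2.2 s sᶜ hsv this)
end

section
/- Let ⟨A, →⟩ be a conditional algebra and B ⊆ A a Boolean subalgebra. Then the following are equivalent: (1) for all ultrafilters u, w, v of A and every filter F of A, if u ∩ B = w ∩ B and D_u(F) ⊆ v, then there exist an ultrafilter z of A and a filter G of A such that v ∩ B = z ∩ B, D_w(G) ⊆ z, and every ultrafilter extending G agrees on B with some ultrafilter extending F (i.e., for every ultrafilter p with G ⊆ p there is an ultrafilter q with F ⊆ q and p ∩ B = q ∩ B); (2) B is closed under →, i.e., a → b ∈ B for all a, b ∈ B. -/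
section Helpers

variable {A : Type*} [BooleanAlgebra A]

lemma st14_univ_of_bot {F : Set A} (hF : IsBFilter F) (h : ⊥ ∈ F) : F = Set.univ :=
  Set.eq_univ_of_forall fun y => hF.2.1 ⊥ y h bot_le

lemma st14_not_bot {F : Set A} (hF : IsBFilter F) (hne : F ≠ Set.univ) : ⊥ ∉ F :=
  fun h => hne (st14_univ_of_bot hF h)

lemma st14_le_compl {g a : A} (h : g ⊓ a ≤ ⊥) : g ≤ aᶜ :=
  le_compl_iff_disjoint_right.mpr (disjoint_iff_inf_le.mpr h)

/-- Extension of a filter by one element. -/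
def Fext (F : Set A) (a : A) : Set A := {y | ∃ g ∈ F, g ⊓ a ≤ y}

lemma Fext_filter {F : Set A} (a : A) (hF : IsBFilter F) : IsBFilter (Fext F a) := by
  refine ⟨⟨⊤, hF.1, le_top⟩, ?_, ?_⟩
  · rintro x y ⟨g, hg, hle⟩ hxy; exact ⟨g, hg, hle.trans hxy⟩
  · rintro x y ⟨g, hg, hle⟩ ⟨g', hg', hle'⟩
    refine ⟨g ⊓ g', hF.2.2 g g' hg hg', le_inf ?_ ?_⟩
    · exact le_trans (inf_le_inf_right a inf_le_left) hle
    · exact le_trans (inf_le_inf_right a inf_le_right) hle'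

lemma Fext_subset {F : Set A} (a : A) : F ⊆ Fext F a :=
  fun g hg => ⟨g, hg, inf_le_left⟩

lemma mem_Fext {F : Set A} (a : A) (hF : IsBFilter F) : a ∈ Fext F a :=
  ⟨⊤, hF.1, inf_le_right⟩

lemma Fext_proper {F : Set A} (a : A) (h : ∀ g ∈ F, ¬ g ⊓ a ≤ ⊥) :
    Fext F a ≠ Set.univ := by
  intro hu
  have : (⊥ : A) ∈ Fext F a := hu ▸ Set.mem_univ _
  obtain ⟨g, hg, hle⟩ := this
  exact h g hg hle

/-- Every proper filter extends to an ultrafilter. -/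
lemma st14_exists_ultra {F : Set A} (hF : IsBFilter F) (hne : F ≠ Set.univ) :
    ∃ u : Set A, IsBUltra u ∧ F ⊆ u := by
  have Hchain : ∀ ch ⊆ {G : Set A | IsBFilter G ∧ (⊥ : A) ∉ G ∧ F ⊆ G},
      IsChain (· ⊆ ·) ch → ch.Nonempty →
      ∃ ub ∈ {G : Set A | IsBFilter G ∧ (⊥ : A) ∉ G ∧ F ⊆ G}, ∀ s ∈ ch, s ⊆ ub := by
    rintro ch hch hchain ⟨G₀, hG₀⟩
    refine ⟨⋃₀ ch, ⟨⟨?_, ?_, ?_⟩, ?_, ?_⟩, fun s hs => Set.subset_sUnion_of_mem hs⟩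
    · exact ⟨G₀, hG₀, (hch hG₀).1.1⟩
    · rintro x y ⟨G, hG, hx⟩ hxy; exact ⟨G, hG, (hch hG).1.2.1 x y hx hxy⟩
    · rintro x y ⟨G, hG, hx⟩ ⟨G', hG', hy⟩
      rcases hchain.total hG hG' with h | h
      · exact ⟨G', hG', (hch hG').1.2.2 x y (h hx) hy⟩
      · exact ⟨G, hG, (hch hG).1.2.2 x y hx (h hy)⟩
    · rintro ⟨G, hG, hb⟩; exact (hch hG).2.1 hb
    · exact fun x hx => ⟨G₀, hG₀, (hch hG₀).2.2 hx⟩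
  obtain ⟨m, hFm, hm⟩ := zorn_subset_nonempty
      {G : Set A | IsBFilter G ∧ (⊥ : A) ∉ G ∧ F ⊆ G} Hchain F
      ⟨hF, st14_not_bot hF hne, subset_rfl⟩
  obtain ⟨hmF, hmb, _⟩ := hm.prop
  have hmne : m ≠ Set.univ := fun h => hmb (h ▸ Set.mem_univ _)
  refine ⟨m, ⟨hmF, hmne, ?_⟩, hFm⟩
  intro G hG hGne hmG
  exact (hm.eq_of_subset ⟨hG, st14_not_bot hG hGne, hFm.trans hmG⟩ hmG).symm

lemma st14_compl_mem {u : Set A} (hu : IsBUltra u) {a : A} (ha : a ∉ u) : aᶜ ∈ u := by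
  by_contra hc
  have hproper : Fext u a ≠ Set.univ := by
    refine Fext_proper a fun g hg hle => hc ?_
    exact hu.1.2.1 g aᶜ hg (st14_le_compl hle)
  have := hu.2.2 (Fext u a) (Fext_filter a hu.1) hproper (Fext_subset a)
  exact ha (this ▸ mem_Fext a hu.1)

lemma st14_consistent {u : Set A} (hu : IsBUltra u) {a : A} (h : a ∈ u) (h' : aᶜ ∈ u) :
    False := by
  have : (⊥ : A) ∈ u := by
    have := hu.1.2.2 a aᶜ h h'
    rwa [inf_compl_eq_bot] at this
  exact st14_not_bot hu.1 hu.2.1 this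

/-- If `x ∉ B`, there are two ultrafilters agreeing on `B` but disagreeing on `x`. -/
lemma st14_trace {B : Set A} (hB : IsBSubalgebra B) {x : A} (hx : x ∉ B) :
    ∃ u w : Set A, IsBUltra u ∧ IsBUltra w ∧ u ∩ B = w ∩ B ∧ x ∈ u ∧ x ∉ w := by
  set H : Set A := {y | ∃ e, e ∈ B ∧ e ≤ x ∧ x ⊓ eᶜ ≤ y} with hHdef
  have hHF : IsBFilter H := by
    refine ⟨⟨⊥, hB.2.1, bot_le, le_top⟩, ?_, ?_⟩
    · rintro y z ⟨e, he, hex, hle⟩ hyz; exact ⟨e, he, hex, hle.trans hyz⟩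
    · rintro y z ⟨e, he, hex, hle⟩ ⟨e', he', hex', hle'⟩
      refine ⟨e ⊔ e', hB.2.2.2.1 e he e' he', sup_le hex hex', le_inf ?_ ?_⟩
      · refine le_trans ?_ hle
        rw [compl_sup]
        exact inf_le_inf_left x inf_le_left
      · refine le_trans ?_ hle'
        rw [compl_sup]
        exact inf_le_inf_left x inf_le_right
  have hHproper : H ≠ Set.univ := by
    intro h
    have : (⊥ : A) ∈ H := h ▸ Set.mem_univ _
    obtain ⟨e, he, hex, hle⟩ := this
    have hxe : x ≤ e := by
      have := st14_le_compl hle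
      rwa [compl_compl] at this
    exact hx (le_antisymm hxe hex ▸ he)
  obtain ⟨u, hu, hHu⟩ := st14_exists_ultra hHF hHproper
  have hxu : x ∈ u := hHu ⟨⊥, hB.2.1, bot_le, by rw [compl_bot, inf_top_eq]⟩
  set K : Set A := {y | ∃ e, e ∈ u ∧ e ∈ B ∧ e ⊓ xᶜ ≤ y} with hKdef
  have hKF : IsBFilter K := by
    refine ⟨⟨⊤, hu.1.1, hB.1, le_top⟩, ?_, ?_⟩
    · rintro y z ⟨e, he, heB, hle⟩ hyz; exact ⟨e, he, heB, hle.trans hyz⟩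
    · rintro y z ⟨e, he, heB, hle⟩ ⟨e', he', heB', hle'⟩
      refine ⟨e ⊓ e', hu.1.2.2 e e' he he', hB.2.2.1 e heB e' heB', le_inf ?_ ?_⟩
      · exact le_trans (inf_le_inf_right xᶜ inf_le_left) hle
      · exact le_trans (inf_le_inf_right xᶜ inf_le_right) hle'
  have hKproper : K ≠ Set.univ := by
    intro h
    have : (⊥ : A) ∈ K := h ▸ Set.mem_univ _
    obtain ⟨e, he, heB, hle⟩ := this
    have hex : e ≤ x := by
      have := st14_le_compl hle
      rwa [compl_compl] at this
    have hce : eᶜ ∈ u := hu.1.2.1 (x ⊓ eᶜ) eᶜ (hHu ⟨e, heB, hex, le_rfl⟩) inf_le_right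
    exact st14_consistent hu he hce
  obtain ⟨w, hw, hKw⟩ := st14_exists_ultra hKF hKproper
  have hxcw : xᶜ ∈ w := hKw ⟨⊤, hu.1.1, hB.1, by rw [top_inf_eq]⟩
  have hxw : x ∉ w := fun h => st14_consistent hw h hxcw
  refine ⟨u, w, hu, hw, ?_, hxu, hxw⟩
  ext e
  constructor
  · rintro ⟨heu, heB⟩
    exact ⟨hKw ⟨e, heu, heB, inf_le_left⟩, heB⟩
  · rintro ⟨hew, heB⟩
    refine ⟨?_, heB⟩
    by_contra heu
    have : eᶜ ∈ w := hKw ⟨eᶜ, st14_compl_mem hu heu, hB.2.2.2.2 e heB, inf_le_left⟩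
    exact st14_consistent hw hew this

end Helpers

/-- `E_B` is a C-equivalence on the dual space of a conditional algebra
`⟨A, →⟩` iff the Boolean subalgebra `B` is closed under `→`. -/
theorem statement14 {A : Type*} [BooleanAlgebra A] (c : A → A → A)
    (hC1 : ∀ a : A, c a ⊤ = ⊤)
    (hC2 : ∀ a b d : A, c a b ⊓ c a d = c a (b ⊓ d))
    (hC3 : ∀ a b d : A, c (a ⊔ b) d ≤ c a d ⊓ c b d)
    (B : Set A) (hB : IsBSubalgebra B) :
    (∀ u w v : Set A, IsBUltra u → IsBUltra w → IsBUltra v →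
      ∀ F : Set A, IsBFilter F → u ∩ B = w ∩ B → Dset c u F ⊆ v →
        ∃ z G : Set A, IsBUltra z ∧ IsBFilter G ∧ v ∩ B = z ∩ B ∧ Dset c w G ⊆ z ∧
          ∀ p : Set A, IsBUltra p → G ⊆ p →
            ∃ q : Set A, IsBUltra q ∧ F ⊆ q ∧ p ∩ B = q ∩ B) ↔
    (∀ a ∈ B, ∀ b ∈ B, c a b ∈ B) := by
  -- basic monotonicity facts about `c`
  have hanti : ∀ a a' b : A, a' ≤ a → c a b ≤ c a' b := by
    intro a a' b h
    have h3 := hC3 a' a b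
    rw [sup_eq_right.mpr h] at h3
    exact h3.trans inf_le_left
  have hmono : ∀ a b b' : A, b ≤ b' → c a b ≤ c a b' := by
    intro a b b' h
    have h2 := hC2 a b b'
    rw [inf_eq_left.mpr h] at h2
    exact inf_eq_left.mp h2
  constructor
  · -- (1) → (2)
    intro h a ha b hb
    by_contra hx
    obtain ⟨u₀, w₀, hu₀, hw₀, hB0, hxu, hxw⟩ := st14_trace hB hx
    -- the filter `{d | c a d ∈ w₀}` together with `bᶜ` is proper
    set Wa : Set A := {d | c a d ∈ w₀} with hWadef
    have hWaF : IsBFilter Wa := by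
      refine ⟨?_, ?_, ?_⟩
      · show c a ⊤ ∈ w₀; rw [hC1]; exact hw₀.1.1
      · intro d d' hd hdd'
        exact hw₀.1.2.1 _ _ hd (hmono a d d' hdd')
      · intro d d' hd hd'
        have := hw₀.1.2.2 _ _ hd hd'
        rwa [hC2] at this
    have hVproper : Fext Wa bᶜ ≠ Set.univ := by
      refine Fext_proper bᶜ fun d hd hle => ?_
      have hdb : d ≤ b := by
        have := st14_le_compl hle
        rwa [compl_compl] at this
      exact hxw (hw₀.1.2.1 _ _ hd (hmono a d b hdb))
    obtain ⟨v, hv, hVv⟩ := st14_exists_ultra (Fext_filter bᶜ hWaF) hVproper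
    have hWav : Wa ⊆ v := (Fext_subset bᶜ).trans hVv
    have hbcv : bᶜ ∈ v := hVv (mem_Fext bᶜ hWaF)
    -- apply (1) with roles of u₀ and w₀ swapped, F := principal filter of a
    set F : Set A := {y | a ≤ y} with hFdef
    have hFF : IsBFilter F := ⟨le_top, fun p q hp hpq => hp.trans hpq,
      fun p q hp hq => le_inf hp hq⟩
    have hDuv : Dset c w₀ F ⊆ v := by
      rintro d ⟨y, hy, hyd⟩
      exact hWav (hw₀.1.2.1 _ _ hyd (hanti y a d hy))
    obtain ⟨z, G, hz, hG, hvz, hDz, hpq⟩ :=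
      h w₀ u₀ v hw₀ hu₀ hv F hFF (hB0.symm) hDuv
    -- `a` belongs to `G`
    have haG : a ∈ G := by
      by_contra haG
      have hproper : Fext G aᶜ ≠ Set.univ := by
        refine Fext_proper aᶜ fun g hg hle => haG ?_
        have : g ≤ a := by
          have := st14_le_compl hle
          rwa [compl_compl] at this
        exact hG.2.1 g a hg this
      obtain ⟨p, hp, hGp⟩ := st14_exists_ultra (Fext_filter aᶜ hG) hproper
      obtain ⟨q, hq, hFq, hpqB⟩ := hpq p hp ((Fext_subset aᶜ).trans hGp)
      have haq : a ∈ q ∩ B := ⟨hFq le_rfl, ha⟩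
      have hap : a ∈ p := ((Set.ext_iff.mp hpqB a).mpr haq).1
      exact st14_consistent hp hap (hGp (mem_Fext aᶜ hG))
    -- now `b ∈ z`, hence `b ∈ v`, contradicting `bᶜ ∈ v`
    have hbz : b ∈ z := hDz ⟨a, haG, hxu⟩
    have hbv : b ∈ v := ((Set.ext_iff.mp hvz b).mpr (Set.mem_inter hbz hb)).1
    exact st14_consistent hv hbv hbcv
  · -- (2) → (1)
    intro hc u w v hu hw hv F hF huw hDv
    -- G := upward closure of F ∩ B
    set G : Set A := {y | ∃ e, e ∈ F ∧ e ∈ B ∧ e ≤ y} with hGdef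
    have hGF : IsBFilter G := by
      refine ⟨⟨⊤, hF.1, hB.1, le_rfl⟩, ?_, ?_⟩
      · rintro y y' ⟨e, heF, heB, hey⟩ hyy'; exact ⟨e, heF, heB, hey.trans hyy'⟩
      · rintro y y' ⟨e, heF, heB, hey⟩ ⟨e', heF', heB', hey'⟩
        exact ⟨e ⊓ e', hF.2.2 e e' heF heF', hB.2.2.1 e heB e' heB',
          inf_le_inf hey hey'⟩
    -- D_w(G) is a filter
    have hDwG : IsBFilter (Dset c w G) := by
      refine ⟨⟨⊤, hGF.1, by rw [hC1]; exact hw.1.1⟩, ?_, ?_⟩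
      · rintro d d' ⟨y, hy, hyd⟩ hdd'
        exact ⟨y, hy, hw.1.2.1 _ _ hyd (hmono y d d' hdd')⟩
      · rintro d d' ⟨y, hy, hyd⟩ ⟨y', hy', hyd'⟩
        refine ⟨y ⊓ y', hGF.2.2 y y' hy hy', ?_⟩
        rw [← hC2]
        exact hw.1.2.2 _ _
          (hw.1.2.1 _ _ hyd (hanti y (y ⊓ y') d inf_le_left))
          (hw.1.2.1 _ _ hyd' (hanti y' (y ⊓ y') d' inf_le_right))
    -- the filter generated by D_w(G) ∪ (v ∩ B)
    set Hz : Set A := {y | ∃ d e, d ∈ Dset c w G ∧ e ∈ v ∧ e ∈ B ∧ d ⊓ e ≤ y} with hHzdef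
    have hHzF : IsBFilter Hz := by
      refine ⟨⟨⊤, ⊤, hDwG.1, hv.1.1, hB.1, le_top⟩, ?_, ?_⟩
      · rintro y y' ⟨d, e, hd, hev, heB, hle⟩ hyy'
        exact ⟨d, e, hd, hev, heB, hle.trans hyy'⟩
      · rintro y y' ⟨d, e, hd, hev, heB, hle⟩ ⟨d', e', hd', hev', heB', hle'⟩
        refine ⟨d ⊓ d', e ⊓ e', hDwG.2.2 d d' hd hd', hv.1.2.2 e e' hev hev',
          hB.2.2.1 e heB e' heB', ?_⟩
        refine le_inf (le_trans ?_ hle) (le_trans ?_ hle')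
        · exact inf_le_inf inf_le_left inf_le_left
        · exact inf_le_inf inf_le_right inf_le_right
    have hHzproper : Hz ≠ Set.univ := by
      intro hU
      have : (⊥ : A) ∈ Hz := hU ▸ Set.mem_univ _
      obtain ⟨d, e, ⟨y, ⟨g, hgF, hgB, hgy⟩, hyd⟩, hev, heB, hle⟩ := this
      have hdec : d ≤ eᶜ := st14_le_compl hle
      have h1 : c g eᶜ ∈ w :=
        hw.1.2.1 _ _ hyd ((hanti y g d hgy).trans (hmono g d eᶜ hdec))
      have hcB : c g eᶜ ∈ B := hc g hgB eᶜ (hB.2.2.2.2 e heB)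
      have h2 : c g eᶜ ∈ u := ((Set.ext_iff.mp huw _).mpr (Set.mem_inter h1 hcB)).1
      have h3 : eᶜ ∈ v := hDv ⟨g, hgF, h2⟩
      exact st14_consistent hv hev h3
    obtain ⟨z, hz, hHzz⟩ := st14_exists_ultra hHzF hHzproper
    have hDwz : Dset c w G ⊆ z := fun d hd =>
      hHzz ⟨d, ⊤, hd, hv.1.1, hB.1, inf_le_left⟩
    have hvzB : v ∩ B = z ∩ B := by
      ext e
      constructor
      · rintro ⟨hev, heB⟩
        exact ⟨hHzz ⟨⊤, e, hDwG.1, hev, heB, inf_le_right⟩, heB⟩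
      · rintro ⟨hez, heB⟩
        refine ⟨?_, heB⟩
        by_contra hev
        have : eᶜ ∈ z := hHzz ⟨⊤, eᶜ, hDwG.1, st14_compl_mem hv hev,
          hB.2.2.2.2 e heB, inf_le_right⟩
        exact st14_consistent hz hez this
    refine ⟨z, G, hz, hGF, hvzB, hDwz, ?_⟩
    -- every ultrafilter extending G agrees on B with one extending F
    intro p hp hGp
    set Kq : Set A := {y | ∃ g e, g ∈ F ∧ e ∈ p ∧ e ∈ B ∧ g ⊓ e ≤ y} with hKqdef
    have hKqF : IsBFilter Kq := by
      refine ⟨⟨⊤, ⊤, hF.1, hp.1.1, hB.1, le_top⟩, ?_, ?_⟩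
      · rintro y y' ⟨g, e, hg, he, heB, hle⟩ hyy'
        exact ⟨g, e, hg, he, heB, hle.trans hyy'⟩
      · rintro y y' ⟨g, e, hg, he, heB, hle⟩ ⟨g', e', hg', he', heB', hle'⟩
        refine ⟨g ⊓ g', e ⊓ e', hF.2.2 g g' hg hg', hp.1.2.2 e e' he he',
          hB.2.2.1 e heB e' heB', ?_⟩
        refine le_inf (le_trans ?_ hle) (le_trans ?_ hle')
        · exact inf_le_inf inf_le_left inf_le_left
        · exact inf_le_inf inf_le_right inf_le_right
    have hKqproper : Kq ≠ Set.univ := by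
      intro hU
      have : (⊥ : A) ∈ Kq := hU ▸ Set.mem_univ _
      obtain ⟨g, e, hg, he, heB, hle⟩ := this
      have hgec : g ≤ eᶜ := st14_le_compl hle
      have : eᶜ ∈ p := hGp ⟨eᶜ, hF.2.1 g eᶜ hg hgec, hB.2.2.2.2 e heB, le_rfl⟩
      exact st14_consistent hp he this
    obtain ⟨q, hq, hKq⟩ := st14_exists_ultra hKqF hKqproper
    have hFq : F ⊆ q := fun g hg => hKq ⟨g, ⊤, hg, hp.1.1, hB.1, inf_le_left⟩
    refine ⟨q, hq, hFq, ?_⟩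
    ext e
    constructor
    · rintro ⟨hep, heB⟩
      exact ⟨hKq ⟨⊤, e, hF.1, hep, heB, inf_le_right⟩, heB⟩
    · rintro ⟨heq, heB⟩
      refine ⟨?_, heB⟩
      by_contra hep
      have : eᶜ ∈ q := hKq ⟨⊤, eᶜ, hF.1, st14_compl_mem hp hep,
        hB.2.2.2.2 e heB, inf_le_right⟩
      exact st14_consistent hq heq this
end

section
/- Let ⟨A, →⟩ be a conditional algebra, G a filter of A, and Y := φ(G) the corresponding closed set of ultrafilters. Define θ(Y) := {(a, b) ∈ A × A : φ(a) ∩ Y = φ(b) ∩ Y}. Say that Y is T-closed if for all ultrafilters u, v of A with u ∈ Y and every filter H of A such that φ(H) is a minimal element, with respect to inclusion, of the family {φ(H') : H' a filter of A with D_u(H') ⊆ v}, one has φ(H) ⊆ Y and v ∈ Y. Then θ(Y) is compatible with → (i.e., whenever (a, b) ∈ θ(Y) and (c, d) ∈ θ(Y) then (a → c, b → d) ∈ θ(Y)) if and only if Y is T-closed. -/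
/-- `φ(a)` as a set of ultrafilters (represented as subsets of `A`). -/
def phiU {A : Type*} [BooleanAlgebra A] (a : A) : Set (Set A) :=
  {u : Set A | IsBUltra u ∧ a ∈ u}

/-- `φ(F)`, the closed set of all ultrafilters extending the filter `F`. -/
def phiF {A : Type*} [BooleanAlgebra A] (F : Set A) : Set (Set A) :=
  {u : Set A | IsBUltra u ∧ F ⊆ u}

section Helpers

variable {A : Type*} [BooleanAlgebra A]

lemma bfilter_eq_univ {F : Set A} (hF : IsBFilter F) (h : (⊥ : A) ∈ F) : F = Set.univ :=
  Set.eq_univ_of_forall fun x => hF.2.1 ⊥ x h bot_le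

lemma sUnion_bfilter {C : Set (Set A)} (hc : ∀ s ∈ C, IsBFilter s)
    (hchain : IsChain (· ⊆ ·) C) (hne : C.Nonempty) : IsBFilter (⋃₀ C) := by
  obtain ⟨s, hs⟩ := hne
  refine ⟨⟨s, hs, (hc s hs).1⟩, ?_, ?_⟩
  · rintro a b ⟨t, ht, hat⟩ hab
    exact ⟨t, ht, (hc t ht).2.1 a b hat hab⟩
  · rintro a b ⟨t, ht, hat⟩ ⟨t', ht', hbt'⟩
    rcases hchain.total ht ht' with h | h
    · exact ⟨t', ht', (hc t' ht').2.2 a b (h hat) hbt'⟩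
    · exact ⟨t, ht, (hc t ht).2.2 a b hat (h hbt')⟩

/-- The Boolean prime filter theorem: every proper filter extends to an ultrafilter. -/
lemma exists_bultra_s15 {F : Set A} (hF : IsBFilter F) (hbot : (⊥ : A) ∉ F) :
    ∃ u, IsBUltra u ∧ F ⊆ u := by
  obtain ⟨m, hFm, hmS, hmax⟩ :=
    zorn_subset_nonempty {X : Set A | IsBFilter X ∧ (⊥ : A) ∉ X}
      (fun C hC hchain hne =>
        ⟨⋃₀ C, ⟨sUnion_bfilter (fun s hs => (hC hs).1) hchain hne,
          fun ⟨t, ht, hbt⟩ => (hC ht).2 hbt⟩, fun s hs => Set.subset_sUnion_of_mem hs⟩)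
      F ⟨hF, hbot⟩
  refine ⟨m, ⟨hmS.1, ?_, ?_⟩, hFm⟩
  · intro h
    exact hmS.2 (h ▸ Set.mem_univ ⊥)
  · intro F' hF' hF'univ hmF'
    have hbF' : (⊥ : A) ∉ F' := fun hb => hF'univ (bfilter_eq_univ hF' hb)
    exact subset_antisymm (hmax ⟨hF', hbF'⟩ hmF') hmF'

lemma bultra_ne_bot {u : Set A} (hu : IsBUltra u) : (⊥ : A) ∉ u :=
  fun h => hu.2.1 (bfilter_eq_univ hu.1 h)

/-- An ultrafilter extending `F` and omitting `z ∉ F`. -/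
lemma exists_bultra_not_mem {F : Set A} (hF : IsBFilter F) {z : A} (hz : z ∉ F) :
    ∃ u, IsBUltra u ∧ F ⊆ u ∧ z ∉ u := by
  set F' : Set A := {w | ∃ h ∈ F, h ⊓ zᶜ ≤ w} with hF'def
  have hF' : IsBFilter F' := by
    refine ⟨⟨⊤, hF.1, le_top⟩, ?_, ?_⟩
    · rintro a b ⟨h, hh, hle⟩ hab
      exact ⟨h, hh, hle.trans hab⟩
    · rintro a b ⟨h, hh, hle⟩ ⟨h', hh', hle'⟩
      refine ⟨h ⊓ h', hF.2.2 h h' hh hh', ?_⟩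
      calc h ⊓ h' ⊓ zᶜ ≤ (h ⊓ zᶜ) ⊓ (h' ⊓ zᶜ) := by
            refine le_inf ?_ ?_ <;>
              [exact inf_le_inf_right _ inf_le_left; exact inf_le_inf_right _ inf_le_right]
        _ ≤ a ⊓ b := inf_le_inf hle hle'
  have hbot : (⊥ : A) ∉ F' := by
    rintro ⟨h, hh, hle⟩
    have hzb : h ⊓ zᶜ = ⊥ := le_bot_iff.mp hle
    have : h ≤ z := by
      calc h = h ⊓ (z ⊔ zᶜ) := by rw [sup_compl_eq_top, inf_top_eq]
        _ = (h ⊓ z) ⊔ (h ⊓ zᶜ) := inf_sup_left h z zᶜ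
        _ = h ⊓ z := by rw [hzb, sup_bot_eq]
        _ ≤ z := inf_le_right
    exact hz (hF.2.1 h z hh this)
  obtain ⟨u, hu, hsub⟩ := exists_bultra_s15 hF' hbot
  have hFu : F ⊆ u := fun h hh => hsub ⟨h, hh, inf_le_left⟩
  have hzcu : zᶜ ∈ u := hsub ⟨⊤, hF.1, by rw [top_inf_eq]⟩
  refine ⟨u, hu, hFu, fun hzu => ?_⟩
  have : (⊥ : A) ∈ u := by
    have := hu.1.2.2 z zᶜ hzu hzcu
    rwa [inf_compl_eq_bot] at this
  exact bultra_ne_bot hu this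

lemma subset_of_phiF_subset {H H' : Set A} (hH' : IsBFilter H') (hbot : (⊥ : A) ∉ H')
    (hsub : phiF H' ⊆ phiF H) : H ⊆ H' := by
  intro h hh
  by_contra hn
  obtain ⟨w, hw, hsw, hnw⟩ := exists_bultra_not_mem hH' hn
  exact hnw ((hsub ⟨hw, hsw⟩).2 hh)

end Helpers

/-- for `Y = φ(G)`, the Boolean congruence `θ(Y)` is compatible with the
conditional `→` iff `Y` is a `T`-closed set. -/
theorem statement15 {A : Type*} [BooleanAlgebra A] (c : A → A → A)
    (hC1 : ∀ a : A, c a ⊤ = ⊤)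
    (hC2 : ∀ a b d : A, c a b ⊓ c a d = c a (b ⊓ d))
    (hC3 : ∀ a b d : A, c (a ⊔ b) d ≤ c a d ⊓ c b d)
    (G : Set A) (hG : IsBFilter G) :
    (∀ a b x y : A,
      phiU a ∩ phiF G = phiU b ∩ phiF G →
      phiU x ∩ phiF G = phiU y ∩ phiF G →
      phiU (c a x) ∩ phiF G = phiU (c b y) ∩ phiF G) ↔
    (∀ u v : Set A, IsBUltra u → IsBUltra v → u ∈ phiF G →
      ∀ H : Set A, IsBFilter H → Dset c u H ⊆ v →
        (∀ H' : Set A, IsBFilter H' → Dset c u H' ⊆ v →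
          phiF H' ⊆ phiF H → phiF H' = phiF H) →
        phiF H ⊆ phiF G ∧ v ∈ phiF G) := by
  -- monotonicity facts
  have hanti : ∀ {a b : A} (d : A), a ≤ b → c b d ≤ c a d := by
    intro a b d hab
    have h3 := hC3 a b d
    rw [sup_eq_right.mpr hab] at h3
    exact h3.trans inf_le_left
  have hmono : ∀ (a : A) {b d : A}, b ≤ d → c a b ≤ c a d := by
    intro a b d hbd
    have h2 := hC2 a b d
    rw [inf_eq_left.mpr hbd] at h2
    exact inf_eq_left.mp h2
  constructor
  · -- compatibility → T-closed
    intro hcomp u v hu hv huY H hH hD hmin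
    have hvY : v ∈ phiF G := by
      refine ⟨hv, fun g hg => ?_⟩
      have h1 : phiU g ∩ phiF G = phiU (⊤ : A) ∩ phiF G := by
        ext w
        constructor
        · rintro ⟨⟨hw, _⟩, hwY⟩
          exact ⟨⟨hw, hw.1.1⟩, hwY⟩
        · rintro ⟨⟨hw, _⟩, hwY⟩
          exact ⟨⟨hw, hwY.2 hg⟩, hwY⟩
      have h2 := hcomp ⊤ ⊤ g ⊤ rfl h1
      have hu2 : u ∈ phiU (c ⊤ (⊤ : A)) ∩ phiF G :=
        ⟨⟨hu, by rw [hC1]; exact hu.1.1⟩, huY⟩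
      rw [← h2] at hu2
      exact hD ⟨⊤, hH.1, hu2.1.2⟩
    refine ⟨?_, hvY⟩
    intro w hw
    refine ⟨hw.1, fun g hg => ?_⟩
    by_contra hgw
    set H' : Set A := {z | ∃ h ∈ H, h ⊓ g ≤ z} with hH'def
    have hH' : IsBFilter H' := by
      refine ⟨⟨⊤, hH.1, le_top⟩, ?_, ?_⟩
      · rintro a b ⟨h, hh, hle⟩ hab
        exact ⟨h, hh, hle.trans hab⟩
      · rintro a b ⟨h, hh, hle⟩ ⟨h', hh', hle'⟩
        refine ⟨h ⊓ h', hH.2.2 h h' hh hh', ?_⟩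
        calc h ⊓ h' ⊓ g ≤ (h ⊓ g) ⊓ (h' ⊓ g) := by
              refine le_inf ?_ ?_ <;>
                [exact inf_le_inf_right _ inf_le_left; exact inf_le_inf_right _ inf_le_right]
          _ ≤ a ⊓ b := inf_le_inf hle hle'
    have hD' : Dset c u H' ⊆ v := by
      rintro z ⟨h', ⟨h, hh, hle⟩, hcz⟩
      have hcz2 : c (h ⊓ g) z ∈ u := hu.1.2.1 _ _ hcz (hanti z hle)
      have heq : phiU (h ⊓ g) ∩ phiF G = phiU h ∩ phiF G := by
        ext w'
        constructor
        · rintro ⟨⟨hw', hm⟩, hw'Y⟩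
          exact ⟨⟨hw', hw'.1.2.1 _ _ hm inf_le_left⟩, hw'Y⟩
        · rintro ⟨⟨hw', hm⟩, hw'Y⟩
          exact ⟨⟨hw', hw'.1.2.2 _ _ hm (hw'Y.2 hg)⟩, hw'Y⟩
      have h2 := hcomp (h ⊓ g) h z z heq rfl
      have hu2 : u ∈ phiU (c (h ⊓ g) z) ∩ phiF G := ⟨⟨hu, hcz2⟩, huY⟩
      rw [h2] at hu2
      exact hD ⟨h, hh, hu2.1.2⟩
    have hsub : phiF H' ⊆ phiF H := by
      rintro w' ⟨hw', hsw'⟩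
      exact ⟨hw', fun h hh => hsw' ⟨h, hh, inf_le_left⟩⟩
    have heq := hmin H' hH' hD' hsub
    have hwH' : w ∈ phiF H' := heq ▸ hw
    exact hgw (hwH'.2 ⟨⊤, hH.1, inf_le_right⟩)
  · -- T-closed → compatibility
    intro hT a b x y hab hxy
    have key : ∀ a b x y : A,
        phiU a ∩ phiF G = phiU b ∩ phiF G →
        phiU x ∩ phiF G = phiU y ∩ phiF G →
        phiU (c a x) ∩ phiF G ⊆ phiU (c b y) ∩ phiF G := by
      clear hab hxy a b x y
      rintro a b x y hab hxy u ⟨⟨hu, hcax⟩, huY⟩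
      refine ⟨⟨hu, ?_⟩, huY⟩
      by_contra hcby
      -- the filter Δ_u(b)
      set Δ : Set A := {z | c b z ∈ u} with hΔdef
      have hΔ : IsBFilter Δ := by
        refine ⟨?_, ?_, ?_⟩
        · show c b ⊤ ∈ u
          rw [hC1]; exact hu.1.1
        · intro z z' hz hle
          exact hu.1.2.1 _ _ hz (hmono b hle)
        · intro z z' hz hz'
          have := hu.1.2.2 _ _ hz hz'
          rwa [hC2] at this
      obtain ⟨v, hv, hΔv, hyv⟩ := exists_bultra_not_mem hΔ hcby
      set T : Set A := {h | ∀ z, c h z ∈ u → z ∈ v} with hTdef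
      have hbT : b ∈ T := fun z hz => hΔv hz
      have hTup : ∀ h h' : A, h ∈ T → h ≤ h' → h' ∈ T := by
        intro h h' hh hle z hz
        exact hh z (hu.1.2.1 _ _ hz (hanti z hle))
      by_cases hbotT : (⊥ : A) ∈ T
      · -- T is everything; use the improper filter
        have hTuniv : ∀ h : A, h ∈ T := fun h => hTup ⊥ h hbotT bot_le
        have hDuniv : Dset c u Set.univ ⊆ v := by
          rintro z ⟨h, _, hcz⟩
          exact hTuniv h z hcz
        have hphiuniv : phiF (Set.univ : Set A) = (∅ : Set (Set A)) := by
          ext w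
          simp only [phiF, Set.mem_setOf_eq, Set.mem_empty_iff_false, iff_false, not_and]
          intro hw hsub
          exact hw.2.1 (Set.univ_subset_iff.mp hsub)
        obtain ⟨_, hvY⟩ := hT u v hu hv huY Set.univ
          ⟨trivial, fun _ _ _ _ => trivial, fun _ _ _ _ => trivial⟩ hDuniv
          (fun H' _ _ hsub => by
            rw [hphiuniv] at hsub ⊢
            exact Set.subset_empty_iff.mp hsub)
        have hxv : x ∈ v := hDuniv ⟨a, trivial, hcax⟩
        have hvx : v ∈ phiU x ∩ phiF G := ⟨⟨hv, hxv⟩, hvY⟩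
        rw [hxy] at hvx
        exact hyv hvx.1.2
      · -- Zorn: a maximal filter inside T containing b
        set S : Set (Set A) := {F | IsBFilter F ∧ F ⊆ T ∧ b ∈ F} with hSdef
        have hupb : {z : A | b ≤ z} ∈ S := by
          refine ⟨⟨le_top, fun p q hp hpq => hp.trans hpq,
            fun p q hp hq => le_inf hp hq⟩, ?_, le_refl b⟩
          intro h hh
          exact hTup b h hbT hh
        obtain ⟨H, hbH0, hHS, hHmax⟩ := zorn_subset_nonempty S
          (fun C hC hchain hne => by
            obtain ⟨s, hs⟩ := hne
            refine ⟨⋃₀ C, ⟨sUnion_bfilter (fun t ht => (hC ht).1) hchain ⟨s, hs⟩, ?_, ?_⟩,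
              fun t ht => Set.subset_sUnion_of_mem ht⟩
            · rintro h ⟨t, ht, hht⟩
              exact (hC ht).2.1 hht
            · exact ⟨s, hs, (hC hs).2.2⟩)
          _ hupb
        obtain ⟨hHfil, hHT, hbH⟩ := hHS
        have hbotH : (⊥ : A) ∉ H := fun h => hbotT (hHT h)
        have hD : Dset c u H ⊆ v := by
          rintro z ⟨h, hh, hcz⟩
          exact hHT hh z hcz
        have hmin : ∀ H' : Set A, IsBFilter H' → Dset c u H' ⊆ v →
            phiF H' ⊆ phiF H → phiF H' = phiF H := by
          intro H' hH' hD' hsub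
          have hH'T : H' ⊆ T := fun h hh => fun z hz => hD' ⟨h, hh, hz⟩
          have hbotH' : (⊥ : A) ∉ H' := fun h => hbotT (hH'T h)
          have hHH' : H ⊆ H' := subset_of_phiF_subset hH' hbotH' hsub
          have : H' ∈ S := ⟨hH', hH'T, hHH' hbH⟩
          have : H' = H := subset_antisymm (hHmax this hHH') hHH'
          rw [this]
        obtain ⟨hHY, hvY⟩ := hT u v hu hv huY H hHfil hD hmin
        have haH : a ∈ H := by
          by_contra han
          obtain ⟨w, hw, hHw, haw⟩ := exists_bultra_not_mem hHfil han
          have hwY : w ∈ phiF G := hHY ⟨hw, hHw⟩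
          have hwb : w ∈ phiU b ∩ phiF G := ⟨⟨hw, hHw hbH⟩, hwY⟩
          rw [← hab] at hwb
          exact haw hwb.1.2
        have hxv : x ∈ v := hD ⟨a, haH, hcax⟩
        have hvx : v ∈ phiU x ∩ phiF G := ⟨⟨hv, hxv⟩, hvY⟩
        rw [hxy] at hvx
        exact hyv hvx.1.2
    exact subset_antisymm (key a b x y hab hxy) (key b a y x hab.symm hxy.symm)
end

section
/- Let ⟨A, →⟩ be a conditional algebra. Then the inequality a → b ≤ c → (a → b) holds for all a, b, c ∈ A if and only if for all ultrafilters u, v, w of A and all filters F, G of A: if D_u(F) ⊆ v and D_v(G) ⊆ w, then D_u(G) ⊆ w. -/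
section Aux

variable {A : Type*} [BooleanAlgebra A]

lemma bfilter_bot_notMem {F : Set A} (hF : IsBFilter F) (h : F ≠ Set.univ) : ⊥ ∉ F := by
  intro hb
  apply h
  ext x
  simp only [Set.mem_univ, iff_true]
  exact hF.2.1 ⊥ x hb bot_le

lemma bfilter_ne_univ {F : Set A} (h : ⊥ ∉ F) : F ≠ Set.univ := by
  intro he
  exact h (he ▸ Set.mem_univ (⊥ : A))

/-- Every filter avoiding `⊥` extends to an ultrafilter. -/
lemma exists_bultra_extending {F : Set A} (hF : IsBFilter F) (hb : ⊥ ∉ F) :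
    ∃ u : Set A, IsBUltra u ∧ F ⊆ u := by
  set S : Set (Set A) := {G | IsBFilter G ∧ ⊥ ∉ G ∧ F ⊆ G} with hS
  have hFS : F ∈ S := ⟨hF, hb, subset_rfl⟩
  have hchain : ∀ ch ⊆ S, IsChain (· ⊆ ·) ch → ch.Nonempty →
      ∃ ub ∈ S, ∀ s ∈ ch, s ⊆ ub := by
    intro ch hchS hch hne
    obtain ⟨G0, hG0⟩ := hne
    refine ⟨⋃₀ ch, ⟨⟨?_, ?_, ?_⟩, ?_, ?_⟩, fun s hs => Set.subset_sUnion_of_mem hs⟩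
    · exact ⟨G0, hG0, (hchS hG0).1.1⟩
    · rintro a b ⟨G, hG, haG⟩ hab
      exact ⟨G, hG, (hchS hG).1.2.1 a b haG hab⟩
    · rintro a b ⟨G, hG, haG⟩ ⟨H, hH, hbH⟩
      rcases hch.total hG hH with h | h
      · exact ⟨H, hH, (hchS hH).1.2.2 a b (h haG) hbH⟩
      · exact ⟨G, hG, (hchS hG).1.2.2 a b haG (h hbH)⟩
    · rintro ⟨G, hG, hbotG⟩
      exact (hchS hG).2.1 hbotG
    · exact Set.Subset.trans (hchS hG0).2.2 (Set.subset_sUnion_of_mem hG0)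
  obtain ⟨m, hFm, hmS, hmax⟩ := zorn_subset_nonempty S hchain F hFS
  refine ⟨m, ⟨hmS.1, bfilter_ne_univ hmS.2.1, ?_⟩, hFm⟩
  intro G hG hGu hmG
  have hGS : G ∈ S := ⟨hG, bfilter_bot_notMem hG hGu, hFm.trans hmG⟩
  exact Set.Subset.antisymm (hmax hGS hmG) hmG

/-- The filter generated by a filter and one extra element. -/
lemma gen_bfilter {D : Set A} (hD : IsBFilter D) (x : A)
    (hproper : ∀ e ∈ D, ¬ e ⊓ x ≤ ⊥) :
    ∃ G : Set A, IsBFilter G ∧ ⊥ ∉ G ∧ D ⊆ G ∧ x ∈ G := by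
  refine ⟨{e | ∃ f ∈ D, f ⊓ x ≤ e}, ⟨⟨⊤, hD.1, le_top⟩, ?_, ?_⟩, ?_, ?_, ⟨⊤, hD.1, by simp⟩⟩
  · rintro a b ⟨f, hf, hfa⟩ hab
    exact ⟨f, hf, hfa.trans hab⟩
  · rintro a b ⟨f, hf, hfa⟩ ⟨g, hg, hgb⟩
    refine ⟨f ⊓ g, hD.2.2 f g hf hg, ?_⟩
    calc f ⊓ g ⊓ x ≤ (f ⊓ x) ⊓ (g ⊓ x) := by
          simp only [le_inf_iff, inf_le_right, and_true]
          constructor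
          · exact le_trans inf_le_left inf_le_left
          · exact le_trans (inf_le_inf_right x inf_le_right) inf_le_left
      _ ≤ a ⊓ b := inf_le_inf hfa hgb
  · rintro ⟨f, hf, hfb⟩
    exact hproper f hf hfb
  · intro e he
    exact ⟨e, he, inf_le_left⟩

end Aux

/-- `a → b ≤ c → (a → b)` holds in a conditional algebra iff the dual
relation is transitive: `D_u(F) ⊆ v` and `D_v(G) ⊆ w` imply `D_u(G) ⊆ w`. -/
theorem statement18 {A : Type*} [BooleanAlgebra A] (c : A → A → A)
    (hC1 : ∀ a : A, c a ⊤ = ⊤)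
    (hC2 : ∀ a b d : A, c a b ⊓ c a d = c a (b ⊓ d))
    (hC3 : ∀ a b d : A, c (a ⊔ b) d ≤ c a d ⊓ c b d) :
    (∀ a b d : A, c a b ≤ c d (c a b)) ↔
    (∀ u v w : Set A, IsBUltra u → IsBUltra v → IsBUltra w →
      ∀ F G : Set A, IsBFilter F → IsBFilter G →
        Dset c u F ⊆ v → Dset c v G ⊆ w → Dset c u G ⊆ w) := by
  -- monotonicity in the second argument
  have mono2 : ∀ d e e' : A, e ≤ e' → c d e ≤ c d e' := by
    intro d e e' h
    have h2 := hC2 d e e'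
    rw [inf_eq_left.mpr h] at h2
    exact inf_eq_left.mp h2
  constructor
  · -- forward direction
    intro hmain u v w hu hv hw F G hF hG huv hvw
    rintro b ⟨a, haG, hab⟩
    have h1 : c ⊤ (c a b) ∈ u := hu.1.2.1 _ _ hab (hmain a b ⊤)
    have h2 : c a b ∈ v := huv ⟨⊤, hF.1, h1⟩
    exact hvw ⟨a, haG, h2⟩
  · -- converse direction
    intro htrans a b d
    by_contra hle
    set x := c a b with hx
    set y := c d x with hy
    -- u : ultrafilter containing x ⊓ yᶜ
    have hz : x ⊓ yᶜ ≠ ⊥ := by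
      intro h
      apply hle
      rwa [← sdiff_eq, sdiff_eq_bot_iff] at h
    obtain ⟨u, hu, hzu⟩ :
        ∃ u : Set A, IsBUltra u ∧ {e : A | x ⊓ yᶜ ≤ e} ⊆ u := by
      apply exists_bultra_extending
      · exact ⟨le_top, fun p q hp hpq => hp.trans hpq,
          fun p q hp hq => le_inf hp hq⟩
      · intro h
        exact hz (le_bot_iff.mp h)
    have hxu : x ∈ u := hzu inf_le_left
    have hycu : yᶜ ∈ u := hzu inf_le_right
    have hyu : y ∉ u := by
      intro hyu
      have h := hu.1.2.2 y yᶜ hyu hycu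
      rw [inf_compl_eq_bot] at h
      exact bfilter_bot_notMem hu.1 hu.2.1 h
    -- Du = {e | c d e ∈ u} is a filter
    have hDu : IsBFilter {e : A | c d e ∈ u} := by
      refine ⟨by simp only [Set.mem_setOf_eq, hC1]; exact hu.1.1, ?_, ?_⟩
      · intro p q hp hpq
        exact hu.1.2.1 _ _ hp (mono2 d p q hpq)
      · intro p q hp hq
        have := hu.1.2.2 _ _ hp hq
        rwa [hC2] at this
    -- v : ultrafilter containing Du and xᶜ
    obtain ⟨Gv, hGv, hGvbot, hDuGv, hxcGv⟩ :=
      gen_bfilter hDu xᶜ (by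
        intro e he hebot
        apply hyu
        rw [le_bot_iff, ← sdiff_eq, sdiff_eq_bot_iff] at hebot
        exact hu.1.2.1 _ _ he (mono2 d e x hebot))
    obtain ⟨v, hv, hGvv⟩ := exists_bultra_extending hGv hGvbot
    have hxv : x ∉ v := by
      intro hxv
      have h := hv.1.2.2 x xᶜ hxv (hGvv hxcGv)
      rw [inf_compl_eq_bot] at h
      exact bfilter_bot_notMem hv.1 hv.2.1 h
    -- Dv = {e | c a e ∈ v} is a filter
    have hDv : IsBFilter {e : A | c a e ∈ v} := by
      refine ⟨by simp only [Set.mem_setOf_eq, hC1]; exact hv.1.1, ?_, ?_⟩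
      · intro p q hp hpq
        exact hv.1.2.1 _ _ hp (mono2 a p q hpq)
      · intro p q hp hq
        have := hv.1.2.2 _ _ hp hq
        rwa [hC2] at this
    -- w : ultrafilter containing Dv and bᶜ
    obtain ⟨Gw, hGw, hGwbot, hDvGw, hbcGw⟩ :=
      gen_bfilter hDv bᶜ (by
        intro e he hebot
        apply hxv
        rw [le_bot_iff, ← sdiff_eq, sdiff_eq_bot_iff] at hebot
        exact hv.1.2.1 _ _ he (mono2 a e b hebot))
    obtain ⟨w, hw, hGww⟩ := exists_bultra_extending hGw hGwbot
    have hbw : b ∉ w := by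
      intro hbw
      have h := hw.1.2.2 b bᶜ hbw (hGww hbcGw)
      rw [inf_compl_eq_bot] at h
      exact bfilter_bot_notMem hw.1 hw.2.1 h
    -- principal filters at d and a
    have hPF : IsBFilter {e : A | d ≤ e} :=
      ⟨le_top, fun p q hp hpq => hp.trans hpq, fun p q hp hq => le_inf hp hq⟩
    have hPG : IsBFilter {e : A | a ≤ e} :=
      ⟨le_top, fun p q hp hpq => hp.trans hpq, fun p q hp hq => le_inf hp hq⟩
    -- D_u(principal d) ⊆ v
    have h1 : Dset c u {e : A | d ≤ e} ⊆ v := by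
      rintro e ⟨f, hdf, hfe⟩
      apply hGvv
      apply hDuGv
      have h3 := hC3 d f e
      rw [sup_eq_right.mpr hdf] at h3
      exact hu.1.2.1 _ _ hfe (h3.trans inf_le_left)
    -- D_v(principal a) ⊆ w
    have h2 : Dset c v {e : A | a ≤ e} ⊆ w := by
      rintro e ⟨f, haf, hfe⟩
      apply hGww
      apply hDvGw
      have h3 := hC3 a f e
      rw [sup_eq_right.mpr haf] at h3
      exact hv.1.2.1 _ _ hfe (h3.trans inf_le_left)
    exact hbw (htrans u v w hu hv hw _ _ hPF hPG h1 h2 ⟨a, le_refl a, hxu⟩)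
end
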